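/- arXiv:1312.5382 — 7 statements merged into one kernel-verified Lean document; each statement's English description precedes it below -/
import Mathlib

section
/- Let n ≥ 1 and L ≥ 1 be integers, let ε_1, …, ε_L ∈ {1, −1} and let p_1, …, p_L be integers, and set W = x^{ε_1} a^{p_1} ⋯ x^{ε_L} a^{p_L} in the free group on {a, x}. Let E be the group with presentation (a, x : a^n, W), and let f be an integer such that n divides Σ_{i=1}^{L} (ε_i f + p_i), so that there is a homomorphism ν^f : E → ℤ/nℤ with ν^f(a) = 1 and ν^f(x) = f. Define v(1) = 0 and v(i) = Σ_{j=1}^{i−1} (ε_j f + p_j) for 2 ≤ i ≤ L, set u(i) = v(i) if ε_i = 1 and u(i) = v(i) − f if ε_i = −1, and let ρ^f(W) = x_{u(1)}^{ε_1} ⋯ x_{u(L)}^{ε_L}, a word in the free group on x_0, …, x_{n−1} with subscripts taken modulo n. Then the kernel of ν^f is generated by the elements a^i x a^{−(i+f)} for 0 ≤ i ≤ n−1, and there is a group isomorphism φ : G_n(ρ^f(W)) → ker ν^f carrying the image of the generator x_i to a^i x a^{−(i+f)} for each i, which intertwines the shift with conjugation by a: φ(θ(g)) = a φ(g) a^{−1}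 for all g ∈ G_n(ρ^f(W)). -/
namespace CPG

/-- The free group on generators `x_0, …, x_{n-1}` indexed by `ZMod n`. -/
abbrev FG (n : ℕ) := FreeGroup (ZMod n)

/-- The automorphism of the free group sending `x_j` to `x_{j+i}`. -/
def shiftA (n : ℕ) (i : ZMod n) : MulAut (FG n) :=
  FreeGroup.freeGroupCongr (Equiv.addRight i)

/-- The shift automorphism `θ` of the free group, `x_j ↦ x_{j+1}`. -/
def shiftAut (n : ℕ) : MulAut (FG n) := shiftA n 1

/-- The `θ`-orbit of a word `w`: the relator set of the cyclic presentation `P_n(w)`. -/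
def rels (n : ℕ) (w : FG n) : Set (FG n) := Set.range fun i : ZMod n => shiftA n i w

/-- The cyclically presented group `G_n(w)`. -/
abbrev Gp (n : ℕ) (w : FG n) := PresentedGroup (rels n w)

lemma shiftA_shiftA (n : ℕ) (i j : ZMod n) (x : FG n) :
    shiftA n i (shiftA n j x) = shiftA n (j + i) x := by
  show FreeGroup.map _ (FreeGroup.map _ x) = FreeGroup.map _ x
  rw [FreeGroup.map.comp]
  have h : (⇑(Equiv.addRight i) ∘ ⇑(Equiv.addRight j)) = ⇑(Equiv.addRight (j + i)) := by
    funext z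
    simp [add_assoc]
  rw [h]

lemma image_shiftAut_rels (n : ℕ) (w : FG n) :
    (shiftAut n) '' rels n w = rels n w := by
  ext r
  constructor
  · rintro ⟨s, ⟨i, rfl⟩, rfl⟩
    exact ⟨i + 1, (shiftA_shiftA n 1 i w).symm⟩
  · rintro ⟨i, rfl⟩
    refine ⟨shiftA n (i - 1) w, ⟨i - 1, rfl⟩, ?_⟩
    rw [shiftAut, shiftA_shiftA, sub_add_cancel]

lemma map_normalClosure_rels (n : ℕ) (w : FG n) :
    (Subgroup.normalClosure (rels n w)).map (shiftAut n).toMonoidHom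
      = Subgroup.normalClosure (rels n w) := by
  rw [Subgroup.map_normalClosure (rels n w) (shiftAut n).toMonoidHom (shiftAut n).surjective]
  congr 1
  exact image_shiftAut_rels n w

/-- The shift automorphism `θ` of the cyclically presented group `G_n(w)`. -/
def shiftG (n : ℕ) (w : FG n) : MulAut (Gp n w) :=
  QuotientGroup.congr (Subgroup.normalClosure (rels n w)) (Subgroup.normalClosure (rels n w))
    (shiftAut n) (map_normalClosure_rels n w)

/-- The generator `x_k` (subscript mod `n`). -/
def xg (n : ℕ) (k : ℤ) : FG n := FreeGroup.of (k : ZMod n)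

/-- The word `x_0 x_k x_l`. -/
def wkl (n : ℕ) (k l : ℤ) : FG n := xg n 0 * xg n k * xg n l

/-- The cyclically presented group `G_n(k,l) = G_n(x_0 x_k x_l)`. -/
abbrev Gkl (n : ℕ) (k l : ℤ) := Gp n (wkl n k l)

/-- The shift automorphism of `G_n(k,l)`. -/
def shiftKL (n : ℕ) (k l : ℤ) : MulAut (Gkl n k l) := shiftG n (wkl n k l)

end CPG

namespace CPG

/-- The generator `a` of the free group on `{a, x}` (modeled on `Bool`, `a = of false`). -/
def ga : FreeGroup Bool := FreeGroup.of false

/-- The generator `x` of the free group on `{a, x}` (`x = of true`). -/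
def gx : FreeGroup Bool := FreeGroup.of true

/-- The relator set of the presentation `(a, x : a^n, W)`. -/
def rels2 (n : ℕ) (W : FreeGroup Bool) : Set (FreeGroup Bool) := {ga ^ n, W}

/-- The group with presentation `(a, x : a^n, W)`. -/
abbrev E2 (n : ℕ) (W : FreeGroup Bool) := PresentedGroup (rels2 n W)

/-- The image of `a` in `(a, x : a^n, W)`. -/
def a2 (n : ℕ) (W : FreeGroup Bool) : E2 n W := PresentedGroup.of false

/-- The image of `x` in `(a, x : a^n, W)`. -/
def x2 (n : ℕ) (W : FreeGroup Bool) : E2 n W := PresentedGroup.of true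

/-- The relator set of `E_n(k,l) = (a, x : a^n, x a^k x a^(l-k) x a^(-l))`. -/
def relsE (n : ℕ) (k l : ℤ) : Set (FreeGroup Bool) :=
  {ga ^ n, gx * ga ^ k * gx * ga ^ (l - k) * gx * ga ^ (-l)}

/-- The group `E_n(k,l)` with presentation `(a, x : a^n, x a^k x a^(l-k) x a^(-l))`. -/
abbrev Ekl (n : ℕ) (k l : ℤ) := PresentedGroup (relsE n k l)

/-- The image of `a` in `E_n(k,l)`. -/
def aE (n : ℕ) (k l : ℤ) : Ekl n k l := PresentedGroup.of false

/-- The image of `x` in `E_n(k,l)`. -/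
def xE (n : ℕ) (k l : ℤ) : Ekl n k l := PresentedGroup.of true

end CPG



namespace CPGAux
open CPG

/-! ### Telescoping products -/

def psum {L : ℕ} (q : Fin L → ℤ) (i : Fin (L + 1)) : ℤ :=
  ∑ j ∈ Finset.univ.filter (fun j : Fin L => (j : ℕ) < (i : ℕ)), q j

lemma psum_zero {L : ℕ} (q : Fin L → ℤ) : psum q 0 = 0 := by
  simp [psum]

lemma psum_last {L : ℕ} (q : Fin L → ℤ) : psum q (Fin.last L) = ∑ j, q j := by
  unfold psum
  rw [Finset.filter_true_of_mem fun j _ => by simpa using j.isLt]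

lemma psum_castSucc {L : ℕ} (q : Fin L → ℤ) (i : Fin L) :
    psum q i.castSucc = ∑ j ∈ Finset.Iio i, q j := by
  unfold psum; congr 1
  ext j
  simp only [Finset.mem_filter, Finset.mem_univ, true_and, Finset.mem_Iio, Fin.lt_def,
    Fin.coe_castSucc]

lemma psum_succ {L : ℕ} (q : Fin L → ℤ) (i : Fin L) :
    psum q i.succ = psum q i.castSucc + q i := by
  unfold psum
  have h : (Finset.univ.filter fun j : Fin L => (j : ℕ) < ((i.succ : Fin (L+1)) : ℕ))
      = insert i (Finset.univ.filter fun j : Fin L => (j : ℕ) < ((i.castSucc : Fin (L+1)) : ℕ)) := by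
    ext j
    simp only [Finset.mem_filter, Finset.mem_insert, Finset.mem_univ, true_and,
      Fin.coe_castSucc, Fin.val_succ]
    constructor
    · intro hj
      rcases Nat.lt_succ_iff_lt_or_eq.1 hj with h | h
      · exact Or.inr h
      · exact Or.inl (Fin.ext h)
    · rintro (rfl | h)
      · exact Nat.lt_succ_self _
      · exact Nat.lt_succ_of_lt h
  rw [h, Finset.sum_insert (by simp), add_comm]

lemma telescope {M : Type*} [Group M] (L : ℕ) (s : Fin (L + 1) → M) (c : Fin L → M) :
    (List.ofFn fun i : Fin L => s i.castSucc * c i * (s i.succ)⁻¹).prod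
      = s 0 * (List.ofFn c).prod * (s (Fin.last L))⁻¹ := by
  induction L with
  | zero => simp [Fin.last]
  | succ L ih =>
    rw [List.ofFn_succ, List.prod_cons, List.ofFn_succ (f := c), List.prod_cons]
    have h := ih (fun i => s i.succ) (fun i => c i.succ)
    simp only [Fin.succ_castSucc] at h
    rw [h]
    simp only [Fin.castSucc_zero, Fin.succ_last]
    group

/-- The core rewriting computation. -/
lemma core {M : Type*} [Group M] (n : ℕ) {L : ℕ} (ε p : Fin L → ℤ)
    (hε : ∀ i, ε i = 1 ∨ ε i = -1) (f : ℤ) (v u : Fin L → ℤ)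
    (hv : ∀ i, v i = ∑ j ∈ Finset.Iio i, (ε j * f + p j))
    (hu : ∀ i, u i = if ε i = 1 then v i else v i - f)
    (hdiv : (n : ℤ) ∣ ∑ i : Fin L, (ε i * f + p i))
    (A X : M) (hA : A ^ (n : ℤ) = 1) (m : ℤ) :
    (List.ofFn fun i : Fin L => (A ^ (u i + m) * X * A ^ (-(u i + m + f))) ^ ε i).prod
      = A ^ m * (List.ofFn fun i : Fin L => X ^ ε i * A ^ p i).prod * A ^ (-m) := by
  have key : ∀ i : Fin L, (A ^ (u i + m) * X * A ^ (-(u i + m + f))) ^ ε i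
      = (fun i' : Fin (L+1) => A ^ (m + psum (fun j => ε j * f + p j) i')) i.castSucc
          * (X ^ ε i * A ^ p i)
          * ((fun i' : Fin (L+1) => A ^ (m + psum (fun j => ε j * f + p j) i')) i.succ)⁻¹ := by
    intro i
    have hvi : v i = psum (fun j => ε j * f + p j) i.castSucc := by
      rw [hv, psum_castSucc]
    have hsucc : psum (fun j => ε j * f + p j) i.succ
        = psum (fun j => ε j * f + p j) i.castSucc + (ε i * f + p i) := psum_succ _ i
    simp only [hsucc]
    rcases hε i with h1 | h1
    · rw [hu i, if_pos h1, hvi]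
      generalize psum (fun j => ε j * f + p j) i.castSucc = V
      rw [h1]
      group
    · rw [hu i, if_neg (by rw [h1]; norm_num), hvi]
      generalize psum (fun j => ε j * f + p j) i.castSucc = V
      rw [h1]
      group
  calc (List.ofFn fun i : Fin L => (A ^ (u i + m) * X * A ^ (-(u i + m + f))) ^ ε i).prod
      = (List.ofFn fun i : Fin L =>
          (fun i' : Fin (L+1) => A ^ (m + psum (fun j => ε j * f + p j) i')) i.castSucc
            * (X ^ ε i * A ^ p i)
            * ((fun i' : Fin (L+1) => A ^ (m + psum (fun j => ε j * f + p j) i')) i.succ)⁻¹).prod := by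
        simp only [key]
    _ = A ^ m * (List.ofFn fun i : Fin L => X ^ ε i * A ^ p i).prod * A ^ (-m) := by
        rw [telescope L (fun i' : Fin (L+1) => A ^ (m + psum (fun j => ε j * f + p j) i'))
          (fun i => X ^ ε i * A ^ p i)]
        obtain ⟨k, hk⟩ := hdiv
        have h0 : (m + psum (fun j => ε j * f + p j) (0 : Fin (L+1))) = m := by
          rw [psum_zero, add_zero]
        have hlast : A ^ (m + psum (fun j => ε j * f + p j) (Fin.last L)) = A ^ m := by
          rw [psum_last]
          rw [hk, zpow_add, zpow_mul, hA, one_zpow, mul_one]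
        simp only [h0, hlast, zpow_neg]

/-! ### Shifts on the cyclically presented group -/

lemma shiftA_zero (n : ℕ) (w : FG n) : shiftA n 0 w = w := by
  have h : (Equiv.addRight (0 : ZMod n)) = Equiv.refl (ZMod n) := Equiv.ext fun z => add_zero z
  rw [shiftA, h, FreeGroup.freeGroupCongr_refl]
  rfl

lemma image_shiftA_rels (n : ℕ) (i : ZMod n) (w : FG n) :
    (shiftA n i) '' rels n w = rels n w := by
  ext r
  constructor
  · rintro ⟨s, ⟨j, rfl⟩, rfl⟩
    exact ⟨j + i, (shiftA_shiftA n i j w).symm⟩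
  · rintro ⟨j, rfl⟩
    exact ⟨shiftA n (j - i) w, ⟨j - i, rfl⟩, by rw [shiftA_shiftA, sub_add_cancel]⟩

lemma map_normalClosure_rels' (n : ℕ) (i : ZMod n) (w : FG n) :
    (Subgroup.normalClosure (rels n w)).map (shiftA n i).toMonoidHom
      = Subgroup.normalClosure (rels n w) := by
  rw [Subgroup.map_normalClosure (rels n w) (shiftA n i).toMonoidHom (shiftA n i).surjective]
  congr 1
  exact image_shiftA_rels n i w

/-- The shift by `i` on `G_n(w)`. -/
def shiftGA (n : ℕ) (w : FG n) (i : ZMod n) : MulAut (Gp n w) :=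
  QuotientGroup.congr (Subgroup.normalClosure (rels n w)) (Subgroup.normalClosure (rels n w))
    (shiftA n i) (map_normalClosure_rels' n i w)

lemma shiftGA_mk (n : ℕ) (w : FG n) (i : ZMod n) (x : FG n) :
    shiftGA n w i (PresentedGroup.mk (rels n w) x) = PresentedGroup.mk (rels n w) (shiftA n i x) :=
  rfl

lemma shiftGA_of (n : ℕ) (w : FG n) (i j : ZMod n) :
    shiftGA n w i (PresentedGroup.of j) = PresentedGroup.of (j + i) := by
  show shiftGA n w i (PresentedGroup.mk (rels n w) (FreeGroup.of j))
      = PresentedGroup.mk (rels n w) (FreeGroup.of (j + i))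
  rw [shiftGA_mk]
  congr 1

lemma shiftG_eq_shiftGA (n : ℕ) (w : FG n) (g : Gp n w) :
    shiftG n w g = shiftGA n w 1 g := by
  refine QuotientGroup.induction_on g ?_
  intro x
  rfl

/-- The action of `ℤ/n` on `G_n(w)` by shifts. -/
def chi (n : ℕ) (w : FG n) : Multiplicative (ZMod n) →* MulAut (Gp n w) :=
  MonoidHom.mk' (fun h => shiftGA n w h.toAdd) (by
    intro h1 h2
    ext g
    refine QuotientGroup.induction_on g ?_
    intro x
    show shiftGA n w _ (PresentedGroup.mk _ x)
        = shiftGA n w _ (shiftGA n w _ (PresentedGroup.mk _ x))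
    rw [shiftGA_mk, shiftGA_mk, shiftGA_mk, shiftA_shiftA]
    have : (h1 * h2).toAdd = h2.toAdd + h1.toAdd := add_comm _ _
    rw [this])

lemma chi_of (n : ℕ) (w : FG n) (h : Multiplicative (ZMod n)) (j : ZMod n) :
    chi n w h (PresentedGroup.of j) = PresentedGroup.of (j + h.toAdd) :=
  shiftGA_of n w h.toAdd j

/-! ### Homomorphisms out of `ℤ/n` -/

lemma exists_zmodHom {M : Type*} [Group M] (n : ℕ) (A : M) (hA : A ^ (n : ℤ) = 1) :
    ∃ χ : Multiplicative (ZMod n) →* M,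
      ∀ m : ℤ, χ (Multiplicative.ofAdd ((m : ZMod n))) = A ^ m := by
  have hF : (zmultiplesHom (Additive M) (Additive.ofMul A)) (n : ℤ) = 0 := by
    show ((n : ℤ) • Additive.ofMul A) = 0
    rw [← ofMul_zpow, hA]
    rfl
  refine ⟨MonoidHom.mk' (fun h => ((ZMod.lift n ⟨_, hF⟩) h.toAdd).toMul) ?_, ?_⟩
  · intro h1 h2
    show ((ZMod.lift n ⟨_, hF⟩) (h1.toAdd + h2.toAdd)).toMul = _
    rw [map_add]
    rfl
  · intro m
    show ((ZMod.lift n ⟨_, hF⟩) ((m : ZMod n))).toMul = A ^ m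
    rw [ZMod.lift_coe]
    show ((m • Additive.ofMul A)).toMul = A ^ m
    rw [toMul_zsmul]
    rfl

end CPGAux

/-- The Reidemeister–Schreier rewriting: the kernel of the retraction
`ν^f : (a,x : aⁿ, W) → ℤ/nℤ` is generated by the elements `aⁱ x a^(-(i+f))` and is
isomorphic to the cyclically presented group `G_n(ρ^f(W))`, by an isomorphism that carries
the generator `x_i` to `aⁱ x a^(-(i+f))` and intertwines the shift with conjugation by `a`. -/
theorem statement3 (n L : ℕ) (hn : 0 < n) (hL : 0 < L)
    (ε p : Fin L → ℤ) (hε : ∀ i, ε i = 1 ∨ ε i = -1) (f : ℤ)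
    (W : FreeGroup Bool)
    (hW : W = (List.ofFn fun i : Fin L => CPG.gx ^ (ε i) * CPG.ga ^ (p i)).prod)
    (hdiv : (n : ℤ) ∣ ∑ i : Fin L, (ε i * f + p i))
    (v u : Fin L → ℤ)
    (hv : ∀ i, v i = ∑ j ∈ Finset.Iio i, (ε j * f + p j))
    (hu : ∀ i, u i = if ε i = 1 then v i else v i - f)
    (ρW : CPG.FG n)
    (hρ : ρW = (List.ofFn fun i : Fin L => (FreeGroup.of ((u i : ZMod n))) ^ (ε i)).prod)
    (ν : CPG.E2 n W →* Multiplicative (ZMod n))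
    (hνa : ν (CPG.a2 n W) = Multiplicative.ofAdd (1 : ZMod n))
    (hνx : ν (CPG.x2 n W) = Multiplicative.ofAdd ((f : ZMod n))) :
    ν.ker = Subgroup.closure (Set.range fun i : Fin n =>
        CPG.a2 n W ^ (i : ℤ) * CPG.x2 n W * CPG.a2 n W ^ (-((i : ℤ) + f))) ∧
    ∃ φ : CPG.Gp n ρW ≃* ν.ker,
      (∀ i : Fin n, (φ (PresentedGroup.of ((i : ZMod n))) : CPG.E2 n W)
          = CPG.a2 n W ^ (i : ℤ) * CPG.x2 n W * CPG.a2 n W ^ (-((i : ℤ) + f))) ∧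
      (∀ g : CPG.Gp n ρW, (φ (CPG.shiftG n ρW g) : CPG.E2 n W)
          = CPG.a2 n W * (φ g : CPG.E2 n W) * (CPG.a2 n W)⁻¹) := by
  classical
  haveI : NeZero n := ⟨hn.ne'⟩
  -- relators die in the quotient
  have hmk_rel : ∀ r ∈ CPG.rels2 n W, PresentedGroup.mk (CPG.rels2 n W) r = 1 := by
    intro r hr
    exact (QuotientGroup.eq_one_iff r).2 (Subgroup.subset_normalClosure hr)
  have ha_n : CPG.a2 n W ^ (n : ℤ) = 1 := by
    have h1 : (PresentedGroup.mk (CPG.rels2 n W)) (CPG.ga ^ n) = 1 :=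
      hmk_rel _ (Set.mem_insert _ _)
    rw [map_pow] at h1
    rw [zpow_natCast]
    exact h1
  have hW1 : (PresentedGroup.mk (CPG.rels2 n W)) W = 1 :=
    hmk_rel _ (Set.mem_insert_iff.2 (Or.inr rfl))
  obtain ⟨aP, haP⟩ := CPGAux.exists_zmodHom n (CPG.a2 n W) ha_n
  set gof : ZMod n → CPG.E2 n W := fun j =>
    aP (Multiplicative.ofAdd j) * CPG.x2 n W
      * (aP (Multiplicative.ofAdd (j + (f : ZMod n))))⁻¹ with hgof
  have gofc : ∀ c : ℤ, gof ((c : ZMod n)) =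
      CPG.a2 n W ^ c * CPG.x2 n W * CPG.a2 n W ^ (-(c + f)) := by
    intro c
    show aP (Multiplicative.ofAdd ((c : ZMod n))) * CPG.x2 n W
        * (aP (Multiplicative.ofAdd ((c : ZMod n) + (f : ZMod n))))⁻¹ = _
    have h1 : ((c : ZMod n) + (f : ZMod n)) = (((c + f : ℤ) : ZMod n)) := by push_cast; ring
    rw [h1, haP, haP, ← zpow_neg]
  have hlift_shift : ∀ m : ℤ,
      (FreeGroup.lift gof) (CPG.shiftA n ((m : ZMod n)) ρW)
        = (List.ofFn fun i : Fin L =>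
            (CPG.a2 n W ^ (u i + m) * CPG.x2 n W * CPG.a2 n W ^ (-(u i + m + f))) ^ ε i).prod := by
    intro m
    rw [hρ, map_list_prod, map_list_prod, List.map_ofFn, List.map_ofFn]
    congr 1
    refine congrArg List.ofFn (funext fun i => ?_)
    simp only [Function.comp_apply, map_zpow]
    congr 1
    have h2 : CPG.shiftA n ((m : ZMod n)) (FreeGroup.of ((u i : ZMod n)))
        = FreeGroup.of ((u i : ZMod n) + (m : ZMod n)) := rfl
    rw [h2, FreeGroup.lift_apply_of]
    have h3 : ((u i : ZMod n) + (m : ZMod n)) = (((u i + m : ℤ) : ZMod n)) := by push_cast; ring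
    rw [h3, gofc]
  have hrelφ : ∀ r ∈ CPG.rels n ρW, (FreeGroup.lift gof) r = 1 := by
    rintro r ⟨i, rfl⟩
    obtain ⟨m, rfl⟩ := ZMod.intCast_surjective i
    rw [hlift_shift m,
      CPGAux.core n ε p hε f v u hv hu hdiv (CPG.a2 n W) (CPG.x2 n W) ha_n m]
    have hWbar : (List.ofFn fun i : Fin L => CPG.x2 n W ^ ε i * CPG.a2 n W ^ p i).prod = 1 := by
      rw [← hW1, hW, map_list_prod, List.map_ofFn]
      congr 1
    rw [hWbar, mul_one, ← zpow_add]
    simp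
  set φE : CPG.Gp n ρW →* CPG.E2 n W := PresentedGroup.toGroup hrelφ with hφEdef
  have hφE_of : ∀ j : ZMod n, φE (PresentedGroup.of j) = gof j := by
    intro j
    exact PresentedGroup.toGroup.of hrelφ
  -- the semidirect product
  set AM : SemidirectProduct (CPG.Gp n ρW) (Multiplicative (ZMod n)) (CPGAux.chi n ρW) :=
    SemidirectProduct.inr (Multiplicative.ofAdd (1 : ZMod n)) with hAMdef
  set XM : SemidirectProduct (CPG.Gp n ρW) (Multiplicative (ZMod n)) (CPGAux.chi n ρW) :=
    SemidirectProduct.inl (PresentedGroup.of ((0 : ZMod n)))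
      * SemidirectProduct.inr (Multiplicative.ofAdd ((f : ZMod n))) with hXMdef
  have hAMz : ∀ c : ℤ, AM ^ c = SemidirectProduct.inr (Multiplicative.ofAdd ((c : ZMod n))) := by
    intro c
    rw [hAMdef, ← map_zpow]
    congr 1
    rw [← ofAdd_zsmul]
    congr 1
    rw [zsmul_eq_mul, mul_one]
  have hAMn : AM ^ (n : ℤ) = 1 := by
    rw [hAMz ((n : ℤ))]
    have h1 : (((n : ℤ) : ZMod n)) = 0 := by
      push_cast
      exact ZMod.natCast_self n
    rw [h1]
    simp
  have hgM : ∀ c : ℤ, AM ^ c * XM * AM ^ (-(c + f))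
      = SemidirectProduct.inl (PresentedGroup.of ((c : ZMod n))) := by
    intro c
    rw [hAMz, hAMz, hXMdef]
    have h1 : ((-(c + f) : ℤ) : ZMod n) = -((c : ZMod n) + (f : ZMod n)) := by push_cast; ring
    rw [h1, ofAdd_neg, ofAdd_add, map_inv, map_mul, mul_inv_rev]
    have key : ∀ (Aa Bb Cc : SemidirectProduct (CPG.Gp n ρW) (Multiplicative (ZMod n))
        (CPGAux.chi n ρW)), Aa * (Bb * Cc) * (Cc⁻¹ * Aa⁻¹) = Aa * Bb * Aa⁻¹ := by
      intros Aa Bb Cc; group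
    rw [key, ← map_inv, ← SemidirectProduct.inl_aut]
    congr 1
    rw [CPGAux.chi_of]
    congr 1
    rw [toAdd_ofAdd, zero_add]
  have hρ1 : (PresentedGroup.mk (CPG.rels n ρW)) ρW = 1 :=
    (QuotientGroup.eq_one_iff ρW).2
      (Subgroup.subset_normalClosure ⟨0, CPGAux.shiftA_zero n ρW⟩)
  have hρbar : (List.ofFn fun i : Fin L =>
      (PresentedGroup.of ((u i : ZMod n)) : CPG.Gp n ρW) ^ ε i).prod = 1 := by
    rw [← hρ1, hρ, map_list_prod, List.map_ofFn]
    congr 1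
  have hrelΦ : ∀ r ∈ CPG.rels2 n W, (FreeGroup.lift (fun b => cond b XM AM)) r = 1 := by
    intro r hr
    obtain rfl | rfl := hr
    · rw [map_pow]
      have h1 : (FreeGroup.lift (fun b => cond b XM AM)) CPG.ga = AM := FreeGroup.lift_apply_of
      rw [h1, ← zpow_natCast]
      exact hAMn
    · rw [hW, map_list_prod, List.map_ofFn]
      have h2 : (List.ofFn ((FreeGroup.lift (fun b => cond b XM AM)) ∘
            fun i : Fin L => CPG.gx ^ ε i * CPG.ga ^ p i))
          = List.ofFn fun i : Fin L => XM ^ ε i * AM ^ p i := by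
        refine congrArg List.ofFn (funext fun i => ?_)
        simp only [Function.comp_apply, map_mul, map_zpow, CPG.gx, CPG.ga, FreeGroup.lift_apply_of,
          Bool.cond_true, Bool.cond_false]
      rw [h2]
      have hc := CPGAux.core n ε p hε f v u hv hu hdiv AM XM hAMn 0
      simp only [zpow_zero, one_mul, mul_one, add_zero, neg_zero] at hc
      rw [← hc]
      have h3 : (List.ofFn fun i : Fin L => (AM ^ (u i) * XM * AM ^ (-(u i + f))) ^ ε i)
          = List.ofFn fun i : Fin L =>
              SemidirectProduct.inl ((PresentedGroup.of ((u i : ZMod n)) : CPG.Gp n ρW) ^ ε i) := by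
        refine congrArg List.ofFn (funext fun i => ?_)
        rw [hgM (u i)]
        exact (map_zpow SemidirectProduct.inl _ _).symm
      rw [h3]
      calc (List.ofFn fun i : Fin L =>
              SemidirectProduct.inl ((PresentedGroup.of ((u i : ZMod n)) : CPG.Gp n ρW) ^ ε i)).prod
          = SemidirectProduct.inl ((List.ofFn fun i : Fin L =>
              (PresentedGroup.of ((u i : ZMod n)) : CPG.Gp n ρW) ^ ε i).prod) := by
            rw [map_list_prod, List.map_ofFn]
            rfl
        _ = 1 := by rw [hρbar, map_one]
  set Φ : CPG.E2 n W →* SemidirectProduct (CPG.Gp n ρW) (Multiplicative (ZMod n))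
      (CPGAux.chi n ρW) := PresentedGroup.toGroup hrelΦ with hΦdef
  have hΦa : Φ (CPG.a2 n W) = AM := PresentedGroup.toGroup.of hrelΦ
  have hΦx : Φ (CPG.x2 n W) = XM := PresentedGroup.toGroup.of hrelΦ
  -- rightHom ∘ Φ = ν
  have hνΦ : ∀ e : CPG.E2 n W, SemidirectProduct.rightHom (Φ e) = ν e := by
    have h1 : SemidirectProduct.rightHom.comp Φ = ν := by
      apply PresentedGroup.ext
      intro b
      cases b
      · show SemidirectProduct.rightHom (Φ (CPG.a2 n W)) = ν (CPG.a2 n W)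
        rw [hΦa, hνa, hAMdef, SemidirectProduct.rightHom_inr]
      · show SemidirectProduct.rightHom (Φ (CPG.x2 n W)) = ν (CPG.x2 n W)
        rw [hΦx, hνx, hXMdef, map_mul, SemidirectProduct.rightHom_inl,
          SemidirectProduct.rightHom_inr, one_mul]
    intro e
    exact DFunLike.congr_fun h1 e
  -- compatibility and the reverse homomorphism
  have hcompat : ∀ h : Multiplicative (ZMod n),
      φE.comp ((CPGAux.chi n ρW) h).toMonoidHom
        = (MulAut.conj (aP h)).toMonoidHom.comp φE := by
    intro h
    apply PresentedGroup.ext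
    intro j
    show φE ((CPGAux.chi n ρW) h (PresentedGroup.of j))
        = MulAut.conj (aP h) (φE (PresentedGroup.of j))
    rw [CPGAux.chi_of, hφE_of, hφE_of, MulAut.conj_apply]
    show aP (Multiplicative.ofAdd (j + h.toAdd)) * CPG.x2 n W
        * (aP (Multiplicative.ofAdd (j + h.toAdd + (f : ZMod n))))⁻¹
        = aP h * (aP (Multiplicative.ofAdd j) * CPG.x2 n W
            * (aP (Multiplicative.ofAdd (j + (f : ZMod n))))⁻¹) * (aP h)⁻¹
    have e1 : Multiplicative.ofAdd (j + h.toAdd) = h * Multiplicative.ofAdd j := by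
      rw [add_comm, ofAdd_add, ofAdd_toAdd]
    have e2 : Multiplicative.ofAdd (j + h.toAdd + (f : ZMod n))
        = h * Multiplicative.ofAdd (j + (f : ZMod n)) := by
      rw [show j + h.toAdd + (f : ZMod n) = h.toAdd + (j + (f : ZMod n)) by ring,
        ofAdd_add, ofAdd_toAdd]
    rw [e1, e2, map_mul, map_mul, mul_inv_rev]
    simp only [mul_assoc]
  set Ξ : SemidirectProduct (CPG.Gp n ρW) (Multiplicative (ZMod n)) (CPGAux.chi n ρW)
      →* CPG.E2 n W := SemidirectProduct.lift φE aP hcompat with hΞdef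
  have hΞΦ : ∀ e : CPG.E2 n W, Ξ (Φ e) = e := by
    have h1 : Ξ.comp Φ = MonoidHom.id _ := by
      apply PresentedGroup.ext
      intro b
      cases b
      · show Ξ (Φ (CPG.a2 n W)) = CPG.a2 n W
        rw [hΦa, hAMdef, hΞdef, SemidirectProduct.lift_inr]
        have h2 : (1 : ZMod n) = (((1 : ℤ)) : ZMod n) := by push_cast; ring
        rw [h2, haP, zpow_one]
      · show Ξ (Φ (CPG.x2 n W)) = CPG.x2 n W
        rw [hΦx, hXMdef, hΞdef, map_mul, SemidirectProduct.lift_inl,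
          SemidirectProduct.lift_inr]
        have h2 : (0 : ZMod n) = (((0 : ℤ)) : ZMod n) := by push_cast; ring
        rw [show φE (PresentedGroup.of ((0 : ZMod n))) = gof ((0 : ZMod n)) from hφE_of _,
          h2, gofc, haP]
        rw [zpow_zero, one_mul, zero_add]
        rw [mul_assoc, ← zpow_add]
        simp
    intro e
    exact DFunLike.congr_fun h1 e
  have hdecomp : ∀ e : CPG.E2 n W, φE ((Φ e).left) * aP ((Φ e).right) = e := by
    intro e
    calc φE ((Φ e).left) * aP ((Φ e).right)
        = Ξ (SemidirectProduct.inl ((Φ e).left))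
            * Ξ (SemidirectProduct.inr ((Φ e).right)) := by
          rw [hΞdef, SemidirectProduct.lift_inl, SemidirectProduct.lift_inr]
      _ = Ξ (SemidirectProduct.inl ((Φ e).left) * SemidirectProduct.inr ((Φ e).right)) :=
          (map_mul _ _ _).symm
      _ = Ξ (Φ e) := by rw [SemidirectProduct.inl_left_mul_inr_right]
      _ = e := hΞΦ e
  -- values of ν on the generators
  have hνg : ∀ c : ℤ, ν (CPG.a2 n W ^ c * CPG.x2 n W * CPG.a2 n W ^ (-(c + f))) = 1 := by
    intro c
    rw [map_mul, map_mul, map_zpow, map_zpow, hνa, hνx, ← ofAdd_zsmul, ← ofAdd_zsmul,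
      ← ofAdd_add, ← ofAdd_add]
    have h1 : c • (1 : ZMod n) + (f : ZMod n) + (-(c + f)) • (1 : ZMod n) = 0 := by
      rw [zsmul_eq_mul, zsmul_eq_mul, mul_one, mul_one]
      push_cast
      ring
    rw [h1, ofAdd_zero]
  -- membership of the generators in the closure
  have hgofS : ∀ j : ZMod n, gof j ∈ Subgroup.closure (Set.range fun i : Fin n =>
      CPG.a2 n W ^ (i : ℤ) * CPG.x2 n W * CPG.a2 n W ^ (-((i : ℤ) + f))) := by
    intro j
    have hj : (((j.val : ℤ)) : ZMod n) = j := by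
      push_cast
      exact ZMod.natCast_rightInverse j
    rw [← hj, gofc]
    apply Subgroup.subset_closure
    exact ⟨⟨j.val, j.val_lt⟩, rfl⟩
  have hφES : ∀ g : CPG.Gp n ρW, φE g ∈ Subgroup.closure (Set.range fun i : Fin n =>
      CPG.a2 n W ^ (i : ℤ) * CPG.x2 n W * CPG.a2 n W ^ (-((i : ℤ) + f))) := by
    intro g
    have h1 : (⊤ : Subgroup (CPG.Gp n ρW)) ≤ Subgroup.comap φE
        (Subgroup.closure (Set.range fun i : Fin n =>
          CPG.a2 n W ^ (i : ℤ) * CPG.x2 n W * CPG.a2 n W ^ (-((i : ℤ) + f)))) := by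
      rw [← PresentedGroup.closure_range_of (CPG.rels n ρW), Subgroup.closure_le]
      rintro _ ⟨j, rfl⟩
      exact SetLike.mem_coe.2 (Subgroup.mem_comap.2 (by rw [hφE_of]; exact hgofS j))
    exact h1 (Subgroup.mem_top g)
  have hrightone : ∀ k : CPG.E2 n W, ν k = 1 → (Φ k).right = 1 := by
    intro k hk
    have h1 : SemidirectProduct.rightHom (Φ k) = 1 := by rw [hνΦ k, hk]
    exact h1
  -- Part 1
  have part1 : ν.ker = Subgroup.closure (Set.range fun i : Fin n =>
      CPG.a2 n W ^ (i : ℤ) * CPG.x2 n W * CPG.a2 n W ^ (-((i : ℤ) + f))) := by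
    apply le_antisymm
    · intro k hk
      have hr1 : (Φ k).right = 1 := hrightone k (MonoidHom.mem_ker.1 hk)
      have h2 := hdecomp k
      rw [hr1, map_one, mul_one] at h2
      rw [← h2]
      exact hφES _
    · rw [Subgroup.closure_le]
      rintro _ ⟨i, rfl⟩
      exact MonoidHom.mem_ker.2 (hνg ((i : ℤ)))
  -- the two homomorphisms
  have hφEker : ∀ g : CPG.Gp n ρW, φE g ∈ ν.ker := by
    intro g
    rw [part1]
    exact hφES g
  set φK : CPG.Gp n ρW →* ν.ker := φE.codRestrict ν.ker hφEker with hφKdef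
  have hφKcoe : ∀ g : CPG.Gp n ρW, ((φK g : ν.ker) : CPG.E2 n W) = φE g := fun g => rfl
  set ψ : ν.ker →* CPG.Gp n ρW := MonoidHom.mk' (fun k => (Φ (k : CPG.E2 n W)).left) (by
    intro k1 k2
    show (Φ ((k1 : CPG.E2 n W) * (k2 : CPG.E2 n W))).left = _
    rw [map_mul, SemidirectProduct.mul_left,
      hrightone (k1 : CPG.E2 n W) (MonoidHom.mem_ker.1 k1.2), map_one]
    rfl) with hψdef
  have hψφ : ∀ g : CPG.Gp n ρW, ψ (φK g) = g := by
    have h1 : ψ.comp φK = MonoidHom.id _ := by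
      apply PresentedGroup.ext
      intro j
      show (Φ ((φK (PresentedGroup.of j) : ν.ker) : CPG.E2 n W)).left = PresentedGroup.of j
      rw [hφKcoe, hφE_of]
      obtain ⟨c, rfl⟩ := ZMod.intCast_surjective j
      rw [gofc, map_mul, map_mul, map_zpow, map_zpow, hΦa, hΦx, hgM c,
        SemidirectProduct.left_inl]
    intro g
    exact DFunLike.congr_fun h1 g
  have hφψ : ∀ k : ν.ker, φK (ψ k) = k := by
    intro k
    apply Subtype.ext
    show φE ((Φ (k : CPG.E2 n W)).left) = (k : CPG.E2 n W)
    have hr1 : (Φ (k : CPG.E2 n W)).right = 1 :=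
      hrightone (k : CPG.E2 n W) (MonoidHom.mem_ker.1 k.2)
    have h2 := hdecomp (k : CPG.E2 n W)
    rw [hr1, map_one, mul_one] at h2
    exact h2
  refine ⟨part1, ⟨MulEquiv.mk ⟨⇑φK, ⇑ψ, hψφ, hφψ⟩ (map_mul φK), ?_, ?_⟩⟩
  · intro i
    show ((φK (PresentedGroup.of ((i : ZMod n))) : ν.ker) : CPG.E2 n W) = _
    rw [hφKcoe, hφE_of]
    have h1 : ((i : ZMod n)) = ((((i : ℤ)) : ZMod n)) := by push_cast; rfl
    rw [h1, gofc]
  · intro g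
    show ((φK (CPG.shiftG n ρW g) : ν.ker) : CPG.E2 n W)
        = CPG.a2 n W * ((φK g : ν.ker) : CPG.E2 n W) * (CPG.a2 n W)⁻¹
    rw [hφKcoe, hφKcoe]
    have h1 : CPG.shiftG n ρW g = (CPGAux.chi n ρW) (Multiplicative.ofAdd (1 : ZMod n)) g := by
      rw [CPGAux.shiftG_eq_shiftGA]
      rfl
    rw [h1]
    have h2 := DFunLike.congr_fun (hcompat (Multiplicative.ofAdd (1 : ZMod n))) g
    simp only [MonoidHom.comp_apply, MulEquiv.coe_toMonoidHom, MulAut.conj_apply] at h2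
    rw [h2]
    have h3 : aP (Multiplicative.ofAdd (1 : ZMod n)) = CPG.a2 n W := by
      have h4 : (1 : ZMod n) = (((1 : ℤ)) : ZMod n) := by push_cast; ring
      rw [h4, haP, zpow_one]
    rw [h3]
end

section
/- Let n be a positive integer and let w be a nonempty cyclically reduced word in the free group F_n on x_0, …, x_{n−1}. Then there exists an integer v with 1 ≤ v ≤ n−1 such that w · θ^v(w) = 1 in F_n if and only if n is even and there exists a reduced word u ∈ F_n such that w = u · θ^{n/2}(u)⁻¹ in F_n. (Moreover, in that case the only such v is v = n/2, so the cyclic presentation P_n(w) is nonorientable exactly in this situation.) -/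
namespace CPG

/-- A word of a free group is cyclically reduced if (it is reduced and) its first letter
is not the inverse of its last letter. -/
def CyclicallyReduced {α : Type*} [DecidableEq α] (w : FreeGroup α) : Prop :=
  ∀ x ∈ w.toWord.head?, ∀ y ∈ w.toWord.getLast?, ¬(x.1 = y.1 ∧ x.2 = !y.2)

end CPG


namespace CPG

lemma reduce_map' {α β : Type*} [DecidableEq α] [DecidableEq β] (f : α → β)
    (hf : Function.Injective f) (L : List (α × Bool)) :
    FreeGroup.reduce (L.map fun p => (f p.1, p.2)) =
      (FreeGroup.reduce L).map fun p => (f p.1, p.2) := by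
  induction L with
  | nil => rfl
  | cons x L ih =>
    rw [List.map_cons, FreeGroup.reduce.cons, FreeGroup.reduce.cons, ih]
    cases h : FreeGroup.reduce L with
    | nil => rfl
    | cons hd tl =>
      simp only [List.map_cons]
      by_cases hc : x.1 = hd.1 ∧ x.2 = !hd.2
      · rw [if_pos ⟨congrArg f hc.1, hc.2⟩, if_pos hc]
      · rw [if_neg (fun ⟨h1, h2⟩ => hc ⟨hf h1, h2⟩), if_neg hc]
        simp

lemma toWord_map' {α β : Type*} [DecidableEq α] [DecidableEq β] (f : α → β)
    (hf : Function.Injective f) (x : FreeGroup α) :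
    (FreeGroup.map f x).toWord = x.toWord.map fun p => (f p.1, p.2) := by
  conv_lhs => rw [← FreeGroup.mk_toWord (x := x)]
  rw [FreeGroup.map.mk, FreeGroup.toWord_mk, reduce_map' f hf, FreeGroup.reduce_toWord]

lemma shiftA_apply' (n : ℕ) (i : ZMod n) (x : FG n) :
    shiftA n i x = FreeGroup.map (fun j => j + i) x := rfl

lemma shiftA_mul (n : ℕ) (i j : ZMod n) :
    shiftA n i * shiftA n j = shiftA n (j + i) :=
  DFunLike.ext _ _ fun x => shiftA_shiftA n i j x

lemma shiftAut_pow (n v : ℕ) : (shiftAut n) ^ v = shiftA n (v : ZMod n) := by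
  induction v with
  | zero =>
    refine DFunLike.ext _ _ fun x => ?_
    rw [pow_zero, Nat.cast_zero, shiftA_apply']
    have h0 : (fun j : ZMod n => j + 0) = id := by funext j; simp
    rw [h0, FreeGroup.map.id]
    rfl
  | succ k ih =>
    rw [pow_succ, ih, shiftAut, shiftA_mul]
    congr 1
    push_cast
    ring

lemma shiftAut_pow_apply (n v : ℕ) (x : FG n) :
    ((shiftAut n) ^ v) x = FreeGroup.map (fun j => j + (v : ZMod n)) x := by
  rw [shiftAut_pow, shiftA_apply']

end CPG

/-- For a nonempty cyclically reduced word `w`, there is `1 ≤ v ≤ n-1`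
with `w ⋅ θᵛ(w) = 1` iff `n` is even and `w = u ⋅ θ^(n/2)(u)⁻¹` for some word `u`;
moreover the only such `v` is `v = n/2`. -/
theorem statement5 (n : ℕ) (hn : 0 < n) (w : CPG.FG n) (hw : w ≠ 1)
    (hcr : CPG.CyclicallyReduced w) :
    ((∃ v : ℕ, 1 ≤ v ∧ v ≤ n - 1 ∧ w * (CPG.shiftAut n ^ v) w = 1) ↔
      (Even n ∧ ∃ u : CPG.FG n, w = u * ((CPG.shiftAut n ^ (n / 2)) u)⁻¹)) ∧
    (∀ v : ℕ, 1 ≤ v → v ≤ n - 1 → w * (CPG.shiftAut n ^ v) w = 1 → v = n / 2) := by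
  haveI : NeZero n := ⟨hn.ne'⟩
  set l := w.toWord with hl
  have hlne : l ≠ [] := fun h => hw (FreeGroup.toWord_eq_nil_iff.mp h)
  have key : ∀ v : ℕ, 1 ≤ v → v ≤ n - 1 → w * (CPG.shiftAut n ^ v) w = 1 →
      (v = n / 2 ∧ Even n ∧ ∃ u : CPG.FG n, w = u * ((CPG.shiftAut n ^ v) u)⁻¹) := by
    intro v hv1 hv2 hrel
    have hσ : (CPG.shiftAut n ^ v) w = w⁻¹ := (mul_eq_one_iff_inv_eq.mp hrel).symm
    set g : ZMod n × Bool → ZMod n × Bool := fun p => (p.1 + (v : ZMod n), p.2) with hg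
    have hinjf : Function.Injective (fun j : ZMod n => j + (v : ZMod n)) :=
      fun a b h => by simpa using h
    have hlist : l.map g = FreeGroup.invRev l := by
      have h := congrArg FreeGroup.toWord hσ
      rwa [CPG.shiftAut_pow_apply, CPG.toWord_map' _ hinjf, FreeGroup.toWord_inv] at h
    have hinvrev : ∀ m : List (ZMod n × Bool),
        FreeGroup.invRev m = (m.map fun p => (p.1, !p.2)).reverse := fun m => rfl
    set L := l.length with hL
    have hidx : ∀ i : ℕ, (hi : i < L) → (hj : L - 1 - i < L) →
        ((l[i]'hi).1 + (v : ZMod n) = (l[L - 1 - i]'hj).1 ∧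
          (l[i]'hi).2 = !(l[L - 1 - i]'hj).2) := by
      intro i hi hj
      have hm : (l.map g)[i]? = (FreeGroup.invRev l)[i]? := by rw [hlist]
      rw [List.getElem?_map, hinvrev,
        List.getElem?_reverse (by simpa using hi), List.getElem?_map,
        List.length_map, List.getElem?_eq_getElem hi,
        List.getElem?_eq_getElem (show L - 1 - i < l.length from hj)] at hm
      simp only [Option.map_some, Option.some.injEq, Prod.ext_iff] at hm
      exact hm
    have h0 : 0 < L := List.length_pos_iff.mpr hlne
    have hL1 : L - 1 - 0 < L := by omega
    -- 2v ≡ 0 (mod n)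
    have hz : (v : ZMod n) + (v : ZMod n) = 0 := by
      have a1 := (hidx 0 h0 hL1).1
      have a2 := (hidx (L - 1 - 0) hL1 (by omega)).1
      simp only [show L - 1 - (L - 1 - 0) = 0 from by omega] at a2
      have a3 : (l[0]'h0).1 + ((v : ZMod n) + (v : ZMod n)) = (l[0]'h0).1 + 0 := by
        rw [← add_assoc, a1, a2]
        exact (add_zero _).symm
      exact add_left_cancel a3
    have hdvd : n ∣ 2 * v := by
      have hz2 : ((2 * v : ℕ) : ZMod n) = 0 := by push_cast; rw [two_mul]; exact hz
      exact (ZMod.natCast_eq_zero_iff _ _).mp hz2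
    have h2vn : 2 * v = n := by
      obtain ⟨c, hc⟩ := hdvd
      have hclt : c < 2 := by
        by_contra hc2
        push_neg at hc2
        have h2c : n * 2 ≤ n * c := Nat.mul_le_mul_left n hc2
        set x := n * c with hx
        omega
      interval_cases c <;> omega
    refine ⟨by omega, ⟨v, by omega⟩, ?_⟩
    -- L is even
    have hLeven : L % 2 = 0 := by
      by_contra hodd
      have hi : L / 2 < L := by omega
      have hs := (hidx (L / 2) hi (by omega)).2
      simp only [show L - 1 - L / 2 = L / 2 from by omega] at hs
      simp at hs
    set t := L / 2 with ht
    refine ⟨FreeGroup.mk (l.take t), ?_⟩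
    have hmap : (l.take t).map g = FreeGroup.invRev (l.drop t) := by
      rw [List.map_take, hlist, hinvrev, hinvrev, List.take_reverse, List.map_drop]
      congr 2
      rw [List.length_map]
      omega
    rw [CPG.shiftAut_pow_apply, FreeGroup.map.mk]
    have hgeq : ((l.take t).map fun p => ((fun j : ZMod n => j + (v : ZMod n)) p.1, p.2))
        = (l.take t).map g := rfl
    rw [hgeq, hmap, FreeGroup.inv_mk, FreeGroup.invRev_invRev, FreeGroup.mul_mk,
      List.take_append_drop]
    rw [hl, FreeGroup.mk_toWord]
  constructor
  · constructor
    · rintro ⟨v, h1, h2, h3⟩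
      obtain ⟨hv, he, u, hu⟩ := key v h1 h2 h3
      rw [hv] at hu
      exact ⟨he, u, hu⟩
    · rintro ⟨hne, u, hu⟩
      obtain ⟨c, hc⟩ := hne
      refine ⟨n / 2, by omega, by omega, ?_⟩
      set σ := CPG.shiftAut n ^ (n / 2) with hσ
      have hσσ : ∀ x : CPG.FG n, σ (σ x) = x := by
        intro x
        have h1 : σ * σ = 1 := by
          rw [hσ, ← pow_add, show n / 2 + n / 2 = n from by omega,
            CPG.shiftAut_pow, ZMod.natCast_self]
          refine DFunLike.ext _ _ fun y => ?_
          rw [CPG.shiftA_apply']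
          have h0 : (fun j : ZMod n => j + 0) = id := by funext j; simp
          rw [h0, FreeGroup.map.id]
          rfl
        calc σ (σ x) = (σ * σ) x := rfl
          _ = x := by rw [h1]; rfl
      rw [hu, map_mul, map_inv, hσσ]
      group
  · intro v h1 h2 h3
    exact (key v h1 h2 h3).1
end

section
/- Let n be a positive integer, let k and l be integers, let d = gcd(n, k, l), and let p be a nonnegative integer. Let θ be the shift automorphism of G_n(k,l) and let θ' be the shift automorphism of G_{n/d}(k/d, l/d). Then θ^p has a nonidentity fixed point in G_n(k,l) if and only if d divides p and θ'^{p/d} has a nonidentity fixed point in G_{n/d}(k/d, l/d). -/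
/-
Write `n = d m`, `k = d k'`, `l = d l'`. Sorting the generators `x_a` of `G_{dm}(dk', dl')` by the
residue of `a` mod `d` sorts the relators too, so `G_{dm}(dk', dl')` is the free product of `d`
copies of `G_m(k', l')`, the `r`-th copy being generated by the `x_{dj+r}`. Under this splitting
`θ^p` carries the `r`-th factor onto the `(r+p)`-th one, acting as a power of `θ'`. A fixed point
of an automorphism that permutes the factors in this way has its reduced word fixed letter by
letter. So if `d ∤ p` only `1` is fixed, while if `d ∣ p` every factor is invariant and `θ^p` acts
on each of them as `θ'^(p/d)`.
-/

open Function Monoid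

namespace Monoid.CoprodI

variable {ι G : Type*} [Monoid G]

theorem exists_fixed_letter_of_lift_apply_eq {σ : ι → ι} (hσ : Injective σ) {f : ι → G →* G}
    (hf : ∀ i, Injective (f i)) {g : CoprodI fun _ : ι => G}
    (hg : lift (fun i => (of (i := σ i)).comp (f i)) g = g) (hg1 : g ≠ 1) :
    ∃ i a, a ≠ 1 ∧ σ i = i ∧ f i a = a := by
  classical
  -- The letterwise image of the normal form of `g` is again reduced, hence it is the normal form
  -- of `g` itself; compare first letters.
  set w := Word.equiv g
  let w' : Word fun _ : ι => G :=
    { toList := w.toList.map fun x => ⟨σ x.1, f x.1 x.2⟩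
      ne_one := by
        simp only [List.mem_map]
        rintro _ ⟨x, hx, rfl⟩ h
        exact w.ne_one x hx ((hf x.1).eq_iff' (map_one _) |>.mp h)
      chain_ne := List.isChain_map _ |>.mpr (w.chain_ne.imp fun _ _ h h' => h (hσ h')) }
  have hwg : w.prod = g := Word.equiv.symm_apply_apply g
  have hw : w' = w := Word.equiv.symm.injective <| by
    change w'.prod = w.prod
    calc w'.prod = lift (fun i => (of (i := σ i)).comp (f i)) w.prod := by
          simp [w', Word.prod, map_list_prod, List.map_map, Function.comp_def]
      _ = w.prod := by rw [hwg, hg]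
  obtain ⟨⟨i, a⟩, l, hl⟩ : ∃ x l, w.toList = x :: l := by
    refine List.exists_cons_of_ne_nil fun h => hg1 ?_
    rw [← hwg, Word.prod, h, List.map_nil, List.prod_nil]
  have hhead := congrArg (List.head? ∘ Word.toList) hw
  simp only [w', comp_apply, hl, List.map_cons, List.head?_cons, Option.some.injEq,
    Sigma.mk.inj_iff, heq_iff_eq] at hhead
  exact ⟨i, a, w.ne_one ⟨i, a⟩ (hl ▸ List.mem_cons_self), hhead⟩

end Monoid.CoprodI

namespace CPG

variable {n : ℕ}

theorem shiftG_of (w : FG n) (x : ZMod n) :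
    shiftG n w (PresentedGroup.of x) = PresentedGroup.of (x + 1) :=
  rfl

theorem shiftG_pow_of (w : FG n) (p : ℕ) (x : ZMod n) :
    (shiftG n w ^ p) (PresentedGroup.of x) = PresentedGroup.of (x + p) := by
  induction p with
  | zero => simp
  | succ p ih => rw [pow_succ', MulAut.mul_apply, ih, shiftG_of, Nat.cast_succ, add_assoc]

theorem shiftA_wkl (k l : ℤ) (i : ZMod n) :
    shiftA n i (wkl n k l) = .of i * .of (i + k) * .of (i + l) := by
  simp [wkl, xg, shiftA, add_comm]

section Relators

variable {k l : ℤ}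

theorem of_mul_of_mul_of_eq_one (j : ZMod n) :
    (PresentedGroup.of j : Gkl n k l) * .of (j + k) * .of (j + l) = 1 := by
  simpa [shiftA_wkl, PresentedGroup.of] using
    PresentedGroup.one_of_mem (rels := rels n (wkl n k l)) ⟨j, rfl⟩

def liftGkl {H : Type*} [Group H] (f : ZMod n → H) (hf : ∀ j, f j * f (j + k) * f (j + l) = 1) :
    Gkl n k l →* H :=
  PresentedGroup.toGroup <| by
    rintro _ ⟨i, rfl⟩
    simpa [shiftA_wkl] using hf i

theorem liftGkl_of {H : Type*} [Group H] (f : ZMod n → H)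
    (hf : ∀ j, f j * f (j + k) * f (j + l) = 1) (j : ZMod n) :
    liftGkl f hf (PresentedGroup.of j) = f j :=
  PresentedGroup.toGroup.of _

end Relators

section Decomposition

variable (d m : ℕ) (k l : ℤ)

def scaleHom : ZMod m →+ ZMod (d * m) :=
  ZMod.lift m ⟨(AddMonoidHom.mulLeft (d : ZMod (d * m))).comp (Int.castAddHom _),
    by simp [← Nat.cast_mul]⟩

variable {d m}

@[simp]
theorem scaleHom_intCast (a : ℤ) : scaleHom d m a = d * a := ZMod.lift_coe _ _ a

@[simp]
theorem scaleHom_natCast (a : ℕ) : scaleHom d m a = d * a := by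
  simpa using scaleHom_intCast (d := d) (m := m) a

variable [NeZero d]

def embedFactor (r : ZMod d) : Gkl m k l →* Gkl (d * m) (d * k) (d * l) :=
  liftGkl (fun j => .of (scaleHom d m j + (r.val : ZMod (d * m)))) fun j => by
    simpa [add_right_comm, mul_add] using
      of_mul_of_mul_of_eq_one (k := d * k) (l := d * l) (scaleHom d m j + (r.val : ZMod (d * m)))

theorem embedFactor_of (r : ZMod d) (j : ZMod m) :
    embedFactor k l r (.of j) = .of (scaleHom d m j + (r.val : ZMod (d * m))) :=
  liftGkl_of _ _ _

variable (d m) in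
def decomposeLetter (a : ℤ) : CoprodI fun _ : ZMod d => Gkl m k l :=
  CoprodI.of (i := (a : ZMod d)) (.of ((a / d : ℤ) : ZMod m))

theorem decomposeLetter_add_mul (a c : ℤ) :
    decomposeLetter d m k l (a + d * c) =
      CoprodI.of (i := (a : ZMod d)) (.of (((a / d : ℤ) : ZMod m) + (c : ZMod m))) := by
  simp [decomposeLetter, Int.add_mul_ediv_left, NeZero.ne]

theorem decomposeLetter_cast_intCast (a : ℤ) :
    decomposeLetter d m k l (ZMod.cast (a : ZMod (d * m)) : ℤ) = decomposeLetter d m k l a := by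
  rw [ZMod.coe_intCast, Int.emod_def, sub_eq_add_neg, Nat.cast_mul, mul_assoc, ← mul_neg,
    decomposeLetter_add_mul]
  simp [decomposeLetter]

def decompose : Gkl (d * m) (d * k) (d * l) →* CoprodI fun _ : ZMod d => Gkl m k l :=
  liftGkl (fun i => decomposeLetter d m k l (ZMod.cast i : ℤ)) fun i => by
    obtain ⟨a, rfl⟩ := ZMod.intCast_surjective i
    rw [← Int.cast_add, ← Int.cast_add, decomposeLetter_cast_intCast,
      decomposeLetter_cast_intCast, decomposeLetter_cast_intCast, decomposeLetter_add_mul, decomposeLetter_add_mul,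
      decomposeLetter, ← map_mul, ← map_mul, of_mul_of_mul_of_eq_one, map_one]

theorem decompose_of_intCast (a : ℤ) :
    decompose k l (.of (a : ZMod (d * m))) = decomposeLetter d m k l a :=
  (liftGkl_of _ _ _).trans (decomposeLetter_cast_intCast k l a)

def recompose : (CoprodI fun _ : ZMod d => Gkl m k l) →* Gkl (d * m) (d * k) (d * l) :=
  CoprodI.lift (embedFactor k l)

theorem decompose_comp_embedFactor (r : ZMod d) :
    (decompose k l).comp (embedFactor (m := m) k l r) =
      CoprodI.of (M := fun _ : ZMod d => Gkl m k l) (i := r) := by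
  refine PresentedGroup.ext fun j => ?_
  obtain ⟨b, rfl⟩ := ZMod.intCast_surjective j
  have hidx : scaleHom d m b + (r.val : ZMod (d * m)) = ((r.val + d * b : ℤ) : ZMod (d * m)) := by
    rw [scaleHom_intCast]; push_cast; ring
  have hdiv : (r.val : ℤ) / d = 0 :=
    Int.ediv_eq_zero_of_lt (by positivity) (by exact_mod_cast r.val_lt)
  rw [MonoidHom.comp_apply, embedFactor_of, hidx, decompose_of_intCast, decomposeLetter_add_mul,
    hdiv]
  simp

theorem recompose_comp_decompose :
    (recompose (d := d) (m := m) k l).comp (decompose k l) = .id _ := by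
  refine PresentedGroup.ext fun i => ?_
  obtain ⟨a, rfl⟩ := ZMod.intCast_surjective i
  have hidx : scaleHom d m ((a / d : ℤ) : ZMod m) + ((a : ZMod d).val : ZMod (d * m)) =
      (a : ZMod (d * m)) := by
    have hval : ((a : ZMod d).val : ZMod (d * m)) = ((a % d : ℤ) : ZMod (d * m)) := by
      rw [← ZMod.val_intCast, Int.cast_natCast]
    rw [scaleHom_intCast, hval, ← Int.cast_natCast d, ← Int.cast_mul, ← Int.cast_add,
      Int.mul_ediv_add_emod]
  rw [MonoidHom.comp_apply, decompose_of_intCast, decomposeLetter, recompose, CoprodI.lift_of,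
    embedFactor_of, hidx, MonoidHom.id_apply]

theorem decompose_comp_recompose :
    (decompose k l).comp (recompose (d := d) (m := m) k l) = .id _ :=
  CoprodI.ext_hom _ _ fun r => by
    rw [MonoidHom.comp_assoc, recompose, CoprodI.lift_comp_of, decompose_comp_embedFactor,
      MonoidHom.id_comp]

theorem embedFactor_injective (r : ZMod d) : Injective (embedFactor (m := m) k l r) :=
  Injective.of_comp (f := decompose k l) <| by
    rw [← MonoidHom.coe_comp, decompose_comp_embedFactor]
    exact CoprodI.of_injective r

theorem shiftKL_pow_comp_embedFactor (p : ℕ) (r : ZMod d) :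
    (shiftKL (d * m) (d * k) (d * l) ^ p).toMonoidHom.comp (embedFactor k l r) =
      (embedFactor k l (r + (p : ZMod d))).comp
        (shiftKL m k l ^ ((r.val + p) / d)).toMonoidHom := by
  refine PresentedGroup.ext fun j => ?_
  -- `x_{dj+r+p} = x_{d(j+q)+s}` where `r + p = d q + s` with `0 ≤ s < d`.
  have hval : (r + p).val = (r.val + p) % d := by
    rw [ZMod.val_add, ZMod.val_natCast, Nat.add_mod_mod]
  simp only [MonoidHom.comp_apply, MulEquiv.coe_toMonoidHom, shiftKL, shiftG_pow_of,
    embedFactor_of, map_add, scaleHom_natCast, add_assoc, hval]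
  congr 2
  rw [← Nat.cast_add, ← Nat.cast_mul, ← Nat.cast_add, Nat.div_add_mod]

theorem recompose_comp_lift (p : ℕ) :
    (recompose k l).comp (CoprodI.lift fun r : ZMod d =>
        (CoprodI.of (i := r + (p : ZMod d))).comp (shiftKL m k l ^ ((r.val + p) / d)).toMonoidHom) =
      (shiftKL (d * m) (d * k) (d * l) ^ p).toMonoidHom.comp (recompose k l) :=
  CoprodI.ext_hom _ _ fun r => by
    rw [MonoidHom.comp_assoc, CoprodI.lift_comp_of, ← MonoidHom.comp_assoc, recompose,
      CoprodI.lift_comp_of, MonoidHom.comp_assoc, CoprodI.lift_comp_of,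
      shiftKL_pow_comp_embedFactor]

theorem exists_ne_one_shiftKL_pow_apply_eq_iff (p : ℕ) :
    (∃ g : Gkl (d * m) (d * k) (d * l), g ≠ 1 ∧
        (shiftKL (d * m) (d * k) (d * l) ^ p) g = g) ↔
      d ∣ p ∧ ∃ g : Gkl m k l, g ≠ 1 ∧ (shiftKL m k l ^ (p / d)) g = g := by
  constructor
  · rintro ⟨g, hg1, hgfix⟩
    have hrec : recompose k l (decompose k l g) = g :=
      DFunLike.congr_fun (recompose_comp_decompose (d := d) (m := m) k l) g
    have hdec : LeftInverse (decompose k l) (recompose k l) :=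
      DFunLike.congr_fun (decompose_comp_recompose (d := d) (m := m) k l)
    have hT := DFunLike.congr_fun (recompose_comp_lift k l p) (decompose k l g)
    rw [MonoidHom.comp_apply, MonoidHom.comp_apply, hrec, MulEquiv.coe_toMonoidHom, hgfix] at hT
    obtain ⟨r, a, ha1, hr, hafix⟩ := CoprodI.exists_fixed_letter_of_lift_apply_eq
      (add_left_injective (p : ZMod d)) (fun r => (shiftKL m k l ^ ((r.val + p) / d)).injective)
      (hdec.injective (hT.trans hrec.symm)) (fun h => hg1 (by rw [← hrec, h, map_one]))
    have hdp : d ∣ p := (ZMod.natCast_eq_zero_iff p d).mp (add_eq_left.mp hr)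
    refine ⟨hdp, a, ha1, ?_⟩
    rwa [Nat.add_div_of_dvd_left hdp, Nat.div_eq_of_lt r.val_lt, zero_add] at hafix
  · rintro ⟨hdp, a, ha1, hafix⟩
    refine ⟨embedFactor k l (0 : ZMod d) a,
      (map_ne_one_iff _ (embedFactor_injective k l _)).mpr ha1, ?_⟩
    have h := DFunLike.congr_fun (shiftKL_pow_comp_embedFactor k l p (0 : ZMod d)) a
    rw [(ZMod.natCast_eq_zero_iff p d).mpr hdp, ZMod.val_zero, zero_add] at h
    simpa [hafix] using h

end Decomposition

end CPG

/-- With `d = gcd(n,k,l)`, the power `θᵖ` of the shift on `G_n(k,l)` has a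
nonidentity fixed point iff `d ∣ p` and `θ'^(p/d)` has a nonidentity fixed point in
`G_{n/d}(k/d, l/d)`. -/
theorem statement7 (n : ℕ) (hn : 0 < n) (k l : ℤ) (d : ℕ)
    (hd : d = Int.gcd (n : ℤ) (Int.gcd k l)) (p : ℕ) :
    (∃ g : CPG.Gkl n k l, g ≠ 1 ∧ (CPG.shiftKL n k l ^ p) g = g) ↔
      (d ∣ p ∧ ∃ g : CPG.Gkl (n / d) (k / (d : ℤ)) (l / (d : ℤ)), g ≠ 1 ∧
        (CPG.shiftKL (n / d) (k / (d : ℤ)) (l / (d : ℤ)) ^ (p / d)) g = g) := by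
  obtain ⟨m, rfl⟩ : d ∣ n := Int.natCast_dvd_natCast.mp (hd ▸ Int.gcd_dvd_left _ _)
  obtain ⟨k', rfl⟩ : (d : ℤ) ∣ k :=
    hd ▸ (Int.gcd_dvd_right _ _).trans (Int.gcd_dvd_left _ _)
  obtain ⟨l', rfl⟩ : (d : ℤ) ∣ l :=
    hd ▸ (Int.gcd_dvd_right _ _).trans (Int.gcd_dvd_right _ _)
  have : NeZero d := ⟨by rintro rfl; simp at hn⟩
  have hd0 : (d : ℤ) ≠ 0 := Int.natCast_ne_zero.mpr (NeZero.ne d)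
  rw [Nat.mul_div_cancel_left m (NeZero.pos d), Int.mul_ediv_cancel_left _ hd0,
    Int.mul_ediv_cancel_left _ hd0]
  exact CPG.exists_ne_one_shiftKL_pow_apply_eq_iff k' l' p
end

section
/- Let n be a positive integer and p an integer with gcd(p, n) = 1. Then the cyclically presented group G_n(0,p), defined by the relators x_i x_i x_{i+p} = x_i² x_{i+p} for i modulo n, is cyclic of order s = 2^n − (−1)^n, generated by the image of x_0. Moreover, the shift automorphism θ of G_n(0,p) fixes a subgroup of order three pointwise: there exists g ∈ G_n(0,p) of order 3 with θ(g) = g (namely g = x_0^{s/3}). -/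
/-!
In `G_n(0,p)` the relators say `x_{i+p} = x_i⁻²`, so `x_{jp} = x_0^{(-2)^j}`; as `p` is invertible
mod `n`, every generator is a power of `x_0`, and going once around the cycle (`j = n`) gives
`x_0^{(-2)^n - 1} = 1`. Conversely `x_i ↦ (-2)^{i/p}` defines a homomorphism onto `ℤ/((-2)^n - 1)`,
so `x_0` has order exactly `s = |(-2)^n - 1| = 2^n - (-1)^n`. The shift sends `x_0` to
`x_1 = x_0^{(-2)^k}` with `(-2)^k ≡ 1 [ZMOD 3]`, hence fixes the element `x_0^{s/3}` of order `3`.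
-/

lemma pow_val_natCast {M : Type*} [Monoid M] {x : M} {n : ℕ} (hx : x ^ n = 1) (k : ℕ) :
    x ^ (k : ZMod n).val = x ^ k := by
  rw [ZMod.val_natCast, ← pow_eq_pow_mod k hx]

lemma pow_val_add {M : Type*} [Monoid M] {x : M} {n : ℕ} [NeZero n] (hx : x ^ n = 1)
    (a b : ZMod n) : x ^ (a + b).val = x ^ a.val * x ^ b.val := by
  rw [ZMod.val_add, ← pow_eq_pow_mod _ hx, pow_add]

lemma map_pow_eq_self_of_modEq {G F : Type*} [Group G] [FunLike F G G] [MonoidHomClass F G G]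
    (φ : F) {g : G} {k d : ℕ} {m : ℤ} (hgd : (g ^ k) ^ d = 1) (hφ : φ g = g ^ m)
    (hm : m ≡ 1 [ZMOD d]) : φ (g ^ k) = g ^ k := by
  have hmod : m ≡ 1 [ZMOD orderOf (g ^ k)] :=
    hm.of_dvd (Int.natCast_dvd_natCast.mpr (orderOf_dvd_of_pow_eq_one hgd))
  calc φ (g ^ k) = (g ^ k) ^ m := by rw [map_pow, hφ, ← zpow_natCast, ← zpow_natCast,
          ← zpow_mul, ← zpow_mul, mul_comm]
    _ = g ^ k := by rw [zpow_eq_zpow_iff_modEq.mpr hmod, zpow_one]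

lemma natAbs_neg_two_pow_sub_one (n : ℕ) :
    ((-2 : ℤ) ^ n - 1).natAbs = ((2 : ℤ) ^ n - (-1) ^ n).natAbs := by
  have h : (-2 : ℤ) ^ n - 1 = (-1) ^ n * (2 ^ n - (-1) ^ n) := by
    rw [mul_sub, ← mul_pow, ← mul_pow]; norm_num
  rw [h, Int.natAbs_mul, Int.natAbs_pow, Int.natAbs_neg, Int.natAbs_one, one_pow, one_mul]

lemma neg_two_pow_ne_one {n : ℕ} (hn : n ≠ 0) : (-2 : ℤ) ^ n ≠ 1 := by
  intro h
  have h2 : (2 : ℕ) ^ n = 1 := by simpa using congrArg Int.natAbs h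
  simp [hn] at h2

namespace CPG

variable {n : ℕ} {p : ℤ}

lemma shiftKL_of {k l : ℤ} (i : ZMod n) :
    shiftKL n k l (PresentedGroup.of i) = PresentedGroup.of (i + 1) :=
  rfl

lemma of_add_eq_zpow (i : ZMod n) :
    (PresentedGroup.of (p + i) : Gkl n 0 p) = PresentedGroup.of i ^ (-2 : ℤ) := by
  have hrel : (PresentedGroup.of i * PresentedGroup.of i * PresentedGroup.of (p + i) :
      Gkl n 0 p) = 1 := by
    have : (QuotientGroup.mk (shiftA n i (wkl n 0 p)) : Gkl n 0 p) = 1 :=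
      (QuotientGroup.eq_one_iff _).mpr (Subgroup.subset_normalClosure ⟨i, rfl⟩)
    simp only [shiftA, wkl, xg, Int.cast_zero, map_mul, FreeGroup.freeGroupCongr_apply,
      FreeGroup.map.of, Equiv.coe_addRight, zero_add] at this
    exact this
  rw [eq_inv_of_mul_eq_one_right hrel]
  group

lemma of_natCast_mul (j : ℕ) :
    (PresentedGroup.of (j * p) : Gkl n 0 p) = PresentedGroup.of 0 ^ (-2 : ℤ) ^ j := by
  induction j with
  | zero => simp
  | succ j ih =>
    rw [Nat.cast_succ, add_one_mul, add_comm, of_add_eq_zpow, ih, ← zpow_mul, pow_succ]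

lemma of_zero_zpow_neg_two_pow_sub_one :
    (PresentedGroup.of 0 : Gkl n 0 p) ^ ((-2 : ℤ) ^ n - 1) = 1 := by
  have h := of_natCast_mul (n := n) (p := p) n
  rw [ZMod.natCast_self, zero_mul] at h
  rw [zpow_sub_one, ← h, mul_inv_cancel]

variable [NeZero n]

lemma of_eq_of_zero_zpow (hp : IsCoprime p n) (i : ZMod n) :
    (PresentedGroup.of i : Gkl n 0 p) =
      PresentedGroup.of 0 ^ (-2 : ℤ) ^ (i * (p : ZMod n)⁻¹).val := by
  rw [← of_natCast_mul, ZMod.natCast_zmod_val, mul_assoc, ZMod.coe_int_inv_mul_eq_one hp, mul_one]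

lemma zpowers_of_zero_eq_top (hp : IsCoprime p n) :
    Subgroup.zpowers (PresentedGroup.of 0 : Gkl n 0 p) = ⊤ := by
  rw [eq_top_iff, ← PresentedGroup.closure_range_of, Subgroup.closure_le]
  rintro _ ⟨i, rfl⟩
  rw [of_eq_of_zero_zpow hp i]
  exact Subgroup.zpow_mem_zpowers _ _

def toZMod (hp : IsCoprime p n) {m : ℕ} (hm : (-2 : ZMod m) ^ n = 1) :
    Gkl n 0 p →* Multiplicative (ZMod m) :=
  PresentedGroup.toGroup (f := fun i => .ofAdd ((-2) ^ (i * (p : ZMod n)⁻¹).val)) <| by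
    rintro _ ⟨i, rfl⟩
    -- with `e = (-2)^{i/p}`, the relator `x_i² x_{i+p}` maps to `e + e + (-2) e = 0`
    have hidx : (p + i) * (p : ZMod n)⁻¹ = 1 + i * (p : ZMod n)⁻¹ := by
      rw [add_mul, ZMod.coe_int_mul_inv_eq_one hp]
    have hE1 : (-2 : ZMod m) ^ (1 : ZMod n).val = -2 := by
      simpa using pow_val_natCast hm 1
    simp only [shiftA, wkl, xg, FreeGroup.freeGroupCongr_apply,
      FreeGroup.map.of, Equiv.coe_addRight, Int.cast_zero, zero_add, map_mul,
      FreeGroup.lift_apply_of, ← ofAdd_add, hidx, pow_val_add hm, hE1]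
    rw [← ofAdd_zero]
    ring_nf

lemma toZMod_of_zero (hp : IsCoprime p n) {m : ℕ} (hm : (-2 : ZMod m) ^ n = 1) :
    toZMod hp hm (PresentedGroup.of 0) = .ofAdd 1 := by
  simp [toZMod]

lemma orderOf_of_zero (hp : IsCoprime p n) :
    orderOf (PresentedGroup.of 0 : Gkl n 0 p) = ((-2 : ℤ) ^ n - 1).natAbs := by
  set m := ((-2 : ℤ) ^ n - 1).natAbs
  have hm : (-2 : ZMod m) ^ n = 1 := by
    have : (((-2 : ℤ) ^ n - 1 : ℤ) : ZMod m) = 0 :=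
      (CharP.intCast_eq_zero_iff (ZMod m) m _).mpr Int.natAbs_dvd_self
    push_cast at this
    exact sub_eq_zero.mp this
  apply Nat.dvd_antisymm
  · rw [← Int.natCast_dvd_natCast, Int.natCast_natAbs, dvd_abs]
    exact orderOf_dvd_iff_zpow_eq_one.mpr of_zero_zpow_neg_two_pow_sub_one
  · simpa [toZMod_of_zero] using orderOf_map_dvd (toZMod hp hm) (PresentedGroup.of 0)

lemma shiftKL_of_zero (hp : IsCoprime p n) :
    shiftKL n 0 p (PresentedGroup.of 0) =
      PresentedGroup.of 0 ^ (-2 : ℤ) ^ ((p : ZMod n)⁻¹).val := by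
  rw [shiftKL_of, zero_add, of_eq_of_zero_zpow hp, one_mul]

end CPG

/-- If `gcd(p,n) = 1` then `G_n(0,p)` is cyclic of order
`s = 2ⁿ − (−1)ⁿ`, generated by the image of `x₀`, and the shift fixes the element
`x₀^(s/3)`, which has order `3`. -/
theorem statement12 (n : ℕ) (hn : 0 < n) (p : ℤ) (hp : Int.gcd p (n : ℤ) = 1)
    (s : ℕ) (hs : (s : ℤ) = 2 ^ n - (-1) ^ n) :
    IsCyclic (CPG.Gkl n 0 p) ∧ Nat.card (CPG.Gkl n 0 p) = s ∧
    Subgroup.zpowers (PresentedGroup.of (0 : ZMod n) : CPG.Gkl n 0 p) = ⊤ ∧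
    CPG.shiftKL n 0 p ((PresentedGroup.of (0 : ZMod n) : CPG.Gkl n 0 p) ^ (s / 3))
      = (PresentedGroup.of (0 : ZMod n) : CPG.Gkl n 0 p) ^ (s / 3) ∧
    orderOf ((PresentedGroup.of (0 : ZMod n) : CPG.Gkl n 0 p) ^ (s / 3)) = 3 := by
  have : NeZero n := ⟨hn.ne'⟩
  have hcop : IsCoprime p n := Int.isCoprime_iff_gcd_eq_one.mpr hp
  have htop := CPG.zpowers_of_zero_eq_top hcop
  have horder : orderOf (PresentedGroup.of 0 : CPG.Gkl n 0 p) = s := by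
    rw [CPG.orderOf_of_zero hcop, natAbs_neg_two_pow_sub_one, ← hs, Int.natAbs_natCast]
  have hs0 : s ≠ 0 := by
    rw [← horder, CPG.orderOf_of_zero hcop, Int.natAbs_ne_zero, sub_ne_zero]
    exact neg_two_pow_ne_one hn.ne'
  have h3 : 3 ∣ s := by
    have := sub_dvd_pow_sub_pow (2 : ℤ) (-1) n
    norm_num [← hs] at this
    exact_mod_cast this
  refine ⟨isCyclic_iff_exists_zpowers_eq_top.mpr ⟨_, htop⟩, ?_, htop, ?_, ?_⟩
  · rw [← horder, ← Nat.card_zpowers, htop, Subgroup.card_top]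
  · refine map_pow_eq_self_of_modEq _ (d := 3) ?_ (CPG.shiftKL_of_zero hcop) ?_
    · rw [← pow_mul, Nat.div_mul_cancel h3, ← horder, pow_orderOf_eq_one]
    · simpa using (show (-2 : ℤ) ≡ 1 [ZMOD 3] by decide).pow ((p : ZMod n)⁻¹).val
  · rw [← horder] at hs0 h3 ⊢
    exact orderOf_pow_orderOf_div hs0 h3
end

section
/- Let n be a positive integer not divisible by 3, and let k and l be integers with gcd(n, k, l) = 1 satisfying condition (C): n ∣ 3k or n ∣ 3l or n ∣ 3(k−l). Then there exists an integer p with gcd(p, n) = 1 and a group isomorphism φ : G_n(k,l) → G_n(0,p) that commutes with the shifts: φ ∘ θ = θ' ∘ φ, where θ and θ' denote the shift automorphisms of G_n(k,l) and G_n(0,p) respectively. -/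
/-!
Modulo `n`, condition (C) together with `3 ∤ n` says that `k ≡ 0`, `l ≡ 0` or `k ≡ l`. The normal
closure of the `θ`-orbit of a word does not change when the word is shifted or cyclically permuted,
so in these three cases `x_0 x_k x_l` may be replaced by `x_0 x_0 x_l`, by `x_0 x_0 x_k`, or (since
`x_0 x_k x_k` is a cyclic permutation of `x_k x_k x_0 = θ^k (x_0 x_0 x_{-k})`) by `x_0 x_0 x_{-k}`.
The two presentations then have the same relator subgroup, and the identity of the free group
induces an isomorphism commuting with the shifts. The new parameter `p` is coprime to `n` because
`gcd(p, n)` divides `n`, `k` and `l`.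
-/

lemma Int.dvd_of_dvd_three_mul {n : ℕ} (h3 : ¬ 3 ∣ n) {m : ℤ} (h : (n : ℤ) ∣ 3 * m) :
    (n : ℤ) ∣ m := by
  have hcop : IsCoprime (n : ℤ) 3 := by
    rw [Int.isCoprime_iff_gcd_eq_one]
    exact Nat.coprime_comm.mp ((Nat.Prime.coprime_iff_not_dvd Nat.prime_three).2 h3)
  exact hcop.dvd_of_dvd_mul_left h

lemma Int.gcd_eq_one_of_dvd_of_gcd_gcd_eq_one {n k l p : ℤ} (hgcd : Int.gcd n (Int.gcd k l) = 1)
    (hk : (Int.gcd p n : ℤ) ∣ k) (hl : (Int.gcd p n : ℤ) ∣ l) : Int.gcd p n = 1 := by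
  have h : (Int.gcd p n : ℤ) ∣ Int.gcd n (Int.gcd k l) :=
    Int.dvd_coe_gcd (Int.gcd_dvd_right _ _) (Int.dvd_coe_gcd hk hl)
  rw [hgcd] at h
  exact Nat.dvd_one.mp (Int.natCast_dvd_natCast.mp h)

namespace CPG

variable {n : ℕ}

lemma rels_shiftA (i : ZMod n) (w : FG n) : rels n (shiftA n i w) = rels n w := by
  ext r
  constructor
  · rintro ⟨j, rfl⟩
    exact ⟨i + j, (shiftA_shiftA n j i w).symm⟩
  · rintro ⟨j, rfl⟩
    refine ⟨j - i, ?_⟩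
    simp only [shiftA_shiftA, add_sub_cancel]

lemma normalClosure_rels_mul_comm_le (a b : FG n) :
    Subgroup.normalClosure (rels n (a * b)) ≤ Subgroup.normalClosure (rels n (b * a)) := by
  refine Subgroup.normalClosure_le_normal ?_
  rintro _ ⟨i, rfl⟩
  change shiftA n i (a * b) ∈ _
  have hconj : shiftA n i (a * b)
      = (shiftA n i b)⁻¹ * shiftA n i (b * a) * (shiftA n i b)⁻¹⁻¹ := by
    simp only [map_mul]
    group
  rw [hconj]
  exact Subgroup.normalClosure_normal.conj_mem _
    (Subgroup.subset_normalClosure (Set.mem_range_self i)) _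

lemma normalClosure_rels_mul_comm (a b : FG n) :
    Subgroup.normalClosure (rels n (a * b)) = Subgroup.normalClosure (rels n (b * a)) :=
  le_antisymm (normalClosure_rels_mul_comm_le a b) (normalClosure_rels_mul_comm_le b a)

lemma exists_mulEquiv_comm_shiftG {w w' : FG n}
    (h : Subgroup.normalClosure (rels n w) = Subgroup.normalClosure (rels n w')) :
    ∃ φ : Gp n w ≃* Gp n w', ∀ g : Gp n w, φ (shiftG n w g) = shiftG n w' (φ g) :=
  ⟨QuotientGroup.quotientMulEquivOfEq h, fun g => QuotientGroup.induction_on g fun _ => rfl⟩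

lemma wkl_congr {k k' l l' : ℤ} (hk : (n : ℤ) ∣ k - k') (hl : (n : ℤ) ∣ l - l') :
    wkl n k l = wkl n k' l' := by
  have hk' := (ZMod.intCast_eq_intCast_iff_dvd_sub k' k n).2 hk
  have hl' := (ZMod.intCast_eq_intCast_iff_dvd_sub l' l n).2 hl
  simp only [wkl, xg, hk', hl']

lemma normalClosure_rels_wkl_zero_right (k : ℤ) :
    Subgroup.normalClosure (rels n (wkl n k 0)) = Subgroup.normalClosure (rels n (wkl n 0 k)) := by
  simpa only [wkl, mul_assoc] using normalClosure_rels_mul_comm (xg n 0 * xg n k) (xg n 0)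

lemma shiftA_wkl_zero_neg (k : ℤ) : shiftA n k (wkl n 0 (-k)) = xg n k * xg n k * xg n 0 := by
  simp [wkl, xg, shiftA, FreeGroup.freeGroupCongr_apply]

lemma normalClosure_rels_wkl_self (k : ℤ) :
    Subgroup.normalClosure (rels n (wkl n k k))
      = Subgroup.normalClosure (rels n (wkl n 0 (-k))) := by
  rw [← rels_shiftA (k : ZMod n) (wkl n 0 (-k)), shiftA_wkl_zero_neg, wkl, mul_assoc]
  exact normalClosure_rels_mul_comm _ _

end CPG

theorem statement13_general (n : ℕ) (h3 : ¬ (3 ∣ n)) (k l : ℤ)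
    (hgcd : Int.gcd (n : ℤ) (Int.gcd k l) = 1)
    (hC : (n : ℤ) ∣ 3 * k ∨ (n : ℤ) ∣ 3 * l ∨ (n : ℤ) ∣ 3 * (k - l)) :
    ∃ p : ℤ, Int.gcd p (n : ℤ) = 1 ∧
      ∃ φ : CPG.Gkl n k l ≃* CPG.Gkl n 0 p,
        ∀ g : CPG.Gkl n k l, φ (CPG.shiftKL n k l g) = CPG.shiftKL n 0 p (φ g) := by
  rcases hC with hk | hl | hkl
  · replace hk := Int.dvd_of_dvd_three_mul h3 hk
    refine ⟨l, Int.gcd_eq_one_of_dvd_of_gcd_gcd_eq_one hgcd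
      ((Int.gcd_dvd_right _ _).trans hk) (Int.gcd_dvd_left _ _),
      CPG.exists_mulEquiv_comm_shiftG ?_⟩
    rw [CPG.wkl_congr (k' := 0) (by rwa [sub_zero]) (sub_self l ▸ dvd_zero _)]
  · replace hl := Int.dvd_of_dvd_three_mul h3 hl
    refine ⟨k, Int.gcd_eq_one_of_dvd_of_gcd_gcd_eq_one hgcd
      (Int.gcd_dvd_left _ _) ((Int.gcd_dvd_right _ _).trans hl),
      CPG.exists_mulEquiv_comm_shiftG ?_⟩
    rw [CPG.wkl_congr (l' := 0) (sub_self k ▸ dvd_zero _) (by rwa [sub_zero])]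
    exact CPG.normalClosure_rels_wkl_zero_right k
  · replace hkl := Int.dvd_of_dvd_three_mul h3 hkl
    have hk : (Int.gcd (-k) n : ℤ) ∣ k := dvd_neg.mp (Int.gcd_dvd_left _ _)
    have hl : (Int.gcd (-k) n : ℤ) ∣ l := by
      simpa using dvd_sub hk ((Int.gcd_dvd_right _ _).trans hkl)
    refine ⟨-k, Int.gcd_eq_one_of_dvd_of_gcd_gcd_eq_one hgcd hk hl,
      CPG.exists_mulEquiv_comm_shiftG ?_⟩
    rw [CPG.wkl_congr (l' := k) (sub_self k ▸ dvd_zero _) (dvd_sub_comm.mp hkl)]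
    exact CPG.normalClosure_rels_wkl_self k

/-- Under condition (C) with `gcd(n,k,l) = 1` and `3 ∤ n`, there is `p`
coprime to `n` and an isomorphism `G_n(k,l) ≃ G_n(0,p)` commuting with the shifts. -/
theorem statement13 (n : ℕ) (hn : 0 < n) (h3 : ¬ (3 ∣ n)) (k l : ℤ)
    (hgcd : Int.gcd (n : ℤ) (Int.gcd k l) = 1)
    (hC : (n : ℤ) ∣ 3 * k ∨ (n : ℤ) ∣ 3 * l ∨ (n : ℤ) ∣ 3 * (k - l)) :
    ∃ p : ℤ, Int.gcd p (n : ℤ) = 1 ∧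
      ∃ φ : CPG.Gkl n k l ≃* CPG.Gkl n 0 p,
        ∀ g : CPG.Gkl n k l, φ (CPG.shiftKL n k l g) = CPG.shiftKL n 0 p (φ g) :=
  statement13_general n h3 k l hgcd hC
end

section
/- Let n be a positive integer divisible by 3 and let k and l be integers with gcd(n, k, l) = 1 and 3 ∤ k+l, satisfying condition (C): n ∣ 3k or n ∣ 3l or n ∣ 3(k−l). Then there exist an integer f with n ∣ 3f and an integer p with gcd(p, n) = 1 and a group homomorphism ν : E_n(k,l) → ℤ/nℤ with ν(a) = 1 and ν(x) = f whose kernel is isomorphic to G_n(0,p). -/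
/-!
Write `p = l - 2k`. If `n ∣ 3k`, then `a ↦ t`, `x ↦ x₀ t⁻ᵏ` and `xⱼ ↦ aʲ x aᵏ⁻ʲ`, `t ↦ a` are
mutually inverse isomorphisms between `E_n(k,l)` and `G_n(0,p) ⋊ C_n`, where the generator `t` of
`C_n` acts on `G_n(0,p)` by the shift. Projecting onto `C_n` gives `ν` with `ν(a) = 1`,
`ν(x) = -k` and kernel `G_n(0,p)`.

The relator of `E_n(l-k,-k)` is a cyclic permutation of the relator `x aᵏ x aˡ⁻ᵏ x a⁻ˡ` of
`E_n(k,l)`, so the two groups coincide, and the substitution `(k,l) ↦ (l-k,-k)` permutes the three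
alternatives of condition (C) cyclically. This reduces everything to the case `n ∣ 3k`.

Finally, a common divisor of `p` and `n` divides `3k` and is prime to `3` (as `p ≡ k + l mod 3`),
so it divides `k`, hence `l = p + 2k`, hence `gcd(n,k,l) = 1`.
-/

lemma gcd_eq_one_of_dvd_three_mul {n k l d p : ℤ} (hgcd : Int.gcd n (Int.gcd k l) = 1)
    (hd : n ∣ 3 * d) (hp : ¬ 3 ∣ p) (hk : ∃ a b, k = a * d + b * p)
    (hl : ∃ a b, l = a * d + b * p) : Int.gcd p n = 1 := by
  set g : ℤ := (Int.gcd p n : ℤ)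
  have hgp : g ∣ p := Int.gcd_dvd_left ..
  have hgn : g ∣ n := Int.gcd_dvd_right ..
  have hgd : g ∣ d := by
    have h3g : IsCoprime 3 g := Int.prime_three.coprime_iff_not_dvd.mpr fun h => hp (h.trans hgp)
    exact h3g.symm.dvd_of_dvd_mul_left (hgn.trans hd)
  have hcomb : ∀ m, (∃ a b, m = a * d + b * p) → g ∣ m := by
    rintro m ⟨a, b, rfl⟩
    exact (hgd.mul_left a).add (hgp.mul_left b)
  have h1 : g ∣ 1 := by
    simpa [hgcd] using Int.dvd_coe_gcd hgn (Int.dvd_coe_gcd (hcomb k hk) (hcomb l hl))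
  exact Nat.dvd_one.mp (Int.natCast_dvd_natCast.mp h1)

namespace CPG

open Multiplicative SemidirectProduct

section ZModLift

variable {H : Type*} [Group H] {n : ℕ}

def zmodPowersHom (g : H) (hg : g ^ n = 1) : Multiplicative (ZMod n) →* H :=
  AddMonoidHom.toMultiplicativeLeft <| ZMod.lift n
    ⟨zmultiplesHom _ (Additive.ofMul g), by simp [← ofMul_pow, hg]⟩

lemma zmodPowersHom_ofAdd_intCast (g : H) (hg : g ^ n = 1) (m : ℤ) :
    zmodPowersHom g hg (ofAdd (m : ZMod n)) = g ^ m := by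
  simp [zmodPowersHom, ZMod.lift_coe]

lemma ofAdd_intCast_eq_zpow (m : ℤ) : ofAdd (m : ZMod n) = ofAdd (1 : ZMod n) ^ m := by
  rw [← ofAdd_zsmul, zsmul_one]

lemma monoidHom_ext_zmod {F F' : Multiplicative (ZMod n) →* H}
    (h : F (ofAdd 1) = F' (ofAdd 1)) : F = F' := by
  refine MonoidHom.ext fun c => ?_
  obtain ⟨m, hm⟩ := ZMod.intCast_surjective c.toAdd
  rw [← ofAdd_toAdd c, ← hm, ofAdd_intCast_eq_zpow, map_zpow, map_zpow, h]

end ZModLift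

def kerCompMulEquiv {G H P : Type*} [Group G] [Group H] [Group P] (g : H →* P) (e : G ≃* H) :
    (g.comp (e : G →* H)).ker ≃* g.ker :=
  (MulEquiv.subgroupCongr (g.ker_comp_mulEquiv e)).trans (e.symm.subgroupMap g.ker).symm

noncomputable def kerRightHomEquiv {N G E : Type*} [Group N] [Group G] [Group E]
    {φ : G →* MulAut N} (e : E ≃* N ⋊[φ] G) : (rightHom.comp (e : E →* N ⋊[φ] G)).ker ≃* N :=
  (kerCompMulEquiv _ e).trans <| (MulEquiv.subgroupCongr range_inl_eq_ker_rightHom.symm).trans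
    (MonoidHom.ofInjective inl_injective).symm

lemma normalClosure_pair_conj {G : Type*} [Group G] (a r u : G) :
    Subgroup.normalClosure {a, u * r * u⁻¹} = Subgroup.normalClosure {a, r} := by
  have hle {r s : G} (v : G) (h : r = v * s * v⁻¹) :
      Subgroup.normalClosure {a, r} ≤ Subgroup.normalClosure {a, s} := by
    refine Subgroup.normalClosure_le_normal (Set.insert_subset_iff.mpr ⟨?_, ?_⟩)
    · exact Subgroup.subset_normalClosure (Set.mem_insert a _)
    · rw [Set.singleton_subset_iff, h]
      exact Subgroup.normalClosure_normal.conj_mem _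
        (Subgroup.subset_normalClosure (Set.mem_insert_of_mem a (Set.mem_singleton s))) v
  exact le_antisymm (hle u rfl) (hle u⁻¹ (by group))

section Shift

variable (n : ℕ) (w : FG n)

lemma image_shiftA_rels (i : ZMod n) : shiftA n i '' rels n w = rels n w := by
  ext r
  constructor
  · rintro ⟨s, ⟨j, rfl⟩, rfl⟩
    exact ⟨j + i, (shiftA_shiftA n i j w).symm⟩
  · rintro ⟨j, rfl⟩
    exact ⟨shiftA n (j - i) w, ⟨j - i, rfl⟩, by rw [shiftA_shiftA, sub_add_cancel]⟩

lemma map_shiftA_normalClosure_rels (i : ZMod n) :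
    (Subgroup.normalClosure (rels n w)).map (shiftA n i).toMonoidHom
      = Subgroup.normalClosure (rels n w) := by
  rw [Subgroup.map_normalClosure (rels n w) (shiftA n i).toMonoidHom (shiftA n i).surjective]
  exact congrArg _ (image_shiftA_rels n w i)

def shiftBy (i : ZMod n) : MulAut (Gp n w) :=
  QuotientGroup.congr _ _ (shiftA n i) (map_shiftA_normalClosure_rels n w i)

lemma shiftBy_of (i j : ZMod n) :
    shiftBy n w i (PresentedGroup.of j) = PresentedGroup.of (j + i) := by
  show PresentedGroup.mk _ (shiftA n i (FreeGroup.of j)) = _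
  simp [shiftA, PresentedGroup.of]

def shiftHom : Multiplicative (ZMod n) →* MulAut (Gp n w) where
  toFun c := shiftBy n w c.toAdd
  map_one' := MulEquiv.toMonoidHom_injective <| PresentedGroup.ext fun j => by
    simp [shiftBy_of]
  map_mul' c d := MulEquiv.toMonoidHom_injective <| PresentedGroup.ext fun j => by
    simp [shiftBy_of, add_assoc, add_comm (toAdd c)]

lemma shiftHom_of (c : Multiplicative (ZMod n)) (j : ZMod n) :
    shiftHom n w c (PresentedGroup.of j) = PresentedGroup.of (j + c.toAdd) :=
  shiftBy_of n w c.toAdd j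

end Shift

section Relations

variable (n : ℕ) (k l : ℤ)

lemma aE_pow_eq_one : aE n k l ^ n = 1 := by
  have h := PresentedGroup.one_of_mem (rels := relsE n k l) (Set.mem_insert (ga ^ n) _)
  rwa [map_pow] at h

lemma relatorE_eq_one :
    xE n k l * aE n k l ^ k * xE n k l * aE n k l ^ (l - k) * xE n k l * aE n k l ^ (-l) = 1 := by
  have h := PresentedGroup.one_of_mem (rels := relsE n k l) (Set.mem_insert_of_mem _ rfl)
  simp only [map_mul, map_zpow] at h
  exact h

lemma aE_zpow_eq_of_dvd_sub {m m' : ℤ} (h : (n : ℤ) ∣ m - m') :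
    aE n k l ^ m = aE n k l ^ m' := by
  obtain ⟨t, ht⟩ := h
  rw [sub_eq_iff_eq_add.mp ht, zpow_add, zpow_mul, zpow_natCast, aE_pow_eq_one, one_zpow, one_mul]

lemma of_mul_of_mul_of_add_eq_one (p : ℤ) (i : ZMod n) :
    (PresentedGroup.of i * PresentedGroup.of i * PresentedGroup.of (p + i) : Gkl n 0 p) = 1 := by
  have h := PresentedGroup.one_of_mem (rels := rels n (wkl n 0 p)) ⟨i, rfl⟩
  simp only [wkl, xg, map_mul, shiftA, FreeGroup.freeGroupCongr_apply, FreeGroup.map.of,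
    Equiv.coe_addRight, Int.cast_zero, zero_add] at h
  exact h

lemma normalClosure_relsE_rotate :
    Subgroup.normalClosure (relsE n k l) = Subgroup.normalClosure (relsE n (l - k) (-k)) := by
  have hconj : gx * ga ^ k * gx * ga ^ (l - k) * gx * ga ^ (-l)
      = gx * ga ^ k * (gx * ga ^ (l - k) * gx * ga ^ (-k - (l - k)) * gx * ga ^ (-(-k)))
        * (gx * ga ^ k)⁻¹ := by
    rw [show -k - (l - k) = -l by ring, neg_neg]
    group
  rw [relsE, relsE, hconj, normalClosure_pair_conj]

def rotateEquiv : Ekl n k l ≃* Ekl n (l - k) (-k) :=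
  QuotientGroup.quotientMulEquivOfEq (normalClosure_relsE_rotate n k l)

lemma rotateEquiv_of (b : Bool) : rotateEquiv n k l (PresentedGroup.of b) = PresentedGroup.of b :=
  rfl

end Relations

section Semidirect

variable (n : ℕ) (k l : ℤ)

abbrev GSemidirect (p : ℤ) := Gkl n 0 p ⋊[shiftHom n (wkl n 0 p)] Multiplicative (ZMod n)

lemma inr_ofAdd_intCast (p m : ℤ) :
    (inr (ofAdd (m : ZMod n)) : GSemidirect n p) = inr (ofAdd 1) ^ m := by
  rw [← map_zpow, ← ofAdd_intCast_eq_zpow]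

def aPow : Multiplicative (ZMod n) →* Ekl n k l :=
  zmodPowersHom (aE n k l) (aE_pow_eq_one n k l)

lemma aPow_ofAdd_intCast (m : ℤ) : aPow n k l (ofAdd (m : ZMod n)) = aE n k l ^ m :=
  zmodPowersHom_ofAdd_intCast _ _ m

lemma aPow_ofAdd_one : aPow n k l (ofAdd 1) = aE n k l := by
  simpa using aPow_ofAdd_intCast n k l 1

variable {n k}

def gklGen (j : ZMod n) : Ekl n k l :=
  aPow n k l (ofAdd j) * xE n k l * aPow n k l (ofAdd ((k : ZMod n) - j))

lemma gklGen_intCast (m : ℤ) :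
    gklGen l (m : ZMod n) = aE n k l ^ m * xE n k l * aE n k l ^ (k - m) := by
  rw [gklGen, ← Int.cast_sub, aPow_ofAdd_intCast, aPow_ofAdd_intCast]

lemma gklGen_mul_gklGen_mul_gklGen (hk : (n : ℤ) ∣ 3 * k) (i : ZMod n) :
    gklGen l i * gklGen l i * gklGen l (((l - 2 * k : ℤ) : ZMod n) + i) = (1 : Ekl n k l) := by
  obtain ⟨m, rfl⟩ := ZMod.intCast_surjective i
  have hexp : aE n k l ^ (k - (m + (l - 2 * k))) = aE n k l ^ (-l - m) :=
    aE_zpow_eq_of_dvd_sub n k l (by convert hk using 1; ring)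
  rw [← Int.cast_add, gklGen_intCast, gklGen_intCast, add_comm _ m, hexp]
  calc _ = aE n k l ^ m * (xE n k l * aE n k l ^ k * xE n k l * aE n k l ^ (l - k) * xE n k l
          * aE n k l ^ (-l)) * aE n k l ^ (-m) := by group
    _ = 1 := by rw [relatorE_eq_one]; group

-- The relator of `E_n(k,l)` maps to `x₀ x₀ x_p t⁻³ᵏ`, and `t³ᵏ = 1` as `n ∣ 3k`.
def toGSemidirect (hk : (n : ℤ) ∣ 3 * k) : Ekl n k l →* GSemidirect n (l - 2 * k) :=
  PresentedGroup.toGroup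
    (f := fun b => cond b ⟨PresentedGroup.of 0, ofAdd ((-k : ℤ) : ZMod n)⟩ (inr (ofAdd 1))) <| by
    rintro r (rfl | rfl)
    · rw [ga, map_pow, FreeGroup.lift_apply_of, cond_false, ← map_pow, ← ofAdd_nsmul,
        nsmul_one, ZMod.natCast_self, ofAdd_zero, map_one]
    · simp only [gx, ga, map_mul, map_zpow, FreeGroup.lift_apply_of, cond_true, cond_false,
        ← inr_ofAdd_intCast]
      ext
      · simp only [mul_left, mul_right, left_inr, right_inr, one_left, map_one, mul_one,
          shiftHom_of, toAdd_mul, toAdd_ofAdd]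
        convert of_mul_of_mul_of_add_eq_one n (l - 2 * k) 0 using 3 <;> push_cast <;> ring_nf
      · have h3k : (3 * k : ZMod n) = 0 := by
          exact_mod_cast (ZMod.intCast_zmod_eq_zero_iff_dvd _ n).mpr hk
        simp only [mul_right, right_inr, one_right, toAdd_mul, toAdd_ofAdd, toAdd_one]
        push_cast
        linear_combination -h3k

lemma toGSemidirect_aE (hk : (n : ℤ) ∣ 3 * k) : toGSemidirect l hk (aE n k l) = inr (ofAdd 1) :=
  PresentedGroup.toGroup.of _

lemma toGSemidirect_xE (hk : (n : ℤ) ∣ 3 * k) :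
    toGSemidirect l hk (xE n k l) = ⟨PresentedGroup.of 0, ofAdd ((-k : ℤ) : ZMod n)⟩ :=
  PresentedGroup.toGroup.of _

lemma toGSemidirect_comp_aPow (hk : (n : ℤ) ∣ 3 * k) :
    (toGSemidirect l hk).comp (aPow n k l) = inr :=
  monoidHom_ext_zmod <| by rw [MonoidHom.comp_apply, aPow_ofAdd_one, toGSemidirect_aE]

def gklToE (hk : (n : ℤ) ∣ 3 * k) : Gkl n 0 (l - 2 * k) →* Ekl n k l :=
  PresentedGroup.toGroup (f := gklGen l) <| by
    rintro r ⟨i, rfl⟩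
    simp only [wkl, xg, map_mul, shiftA, FreeGroup.freeGroupCongr_apply, FreeGroup.map.of,
      Equiv.coe_addRight, Int.cast_zero, zero_add, FreeGroup.lift_apply_of]
    exact gklGen_mul_gklGen_mul_gklGen l hk i

lemma gklToE_comp_shiftHom (hk : (n : ℤ) ∣ 3 * k) (c : Multiplicative (ZMod n)) :
    (gklToE l hk).comp (shiftHom n (wkl n 0 (l - 2 * k)) c).toMonoidHom
      = (MulAut.conj (aPow n k l c)).toMonoidHom.comp (gklToE l hk) := by
  refine PresentedGroup.ext fun j => ?_
  obtain ⟨m, hm⟩ := ZMod.intCast_surjective c.toAdd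
  obtain ⟨m', rfl⟩ := ZMod.intCast_surjective j
  rw [← ofAdd_toAdd c, ← hm]
  simp only [MonoidHom.comp_apply, MulEquiv.coe_toMonoidHom, MulAut.conj_apply, shiftHom_of,
    toAdd_ofAdd, gklToE, PresentedGroup.toGroup.of, ← Int.cast_add, gklGen_intCast,
    aPow_ofAdd_intCast]
  group

def ofGSemidirect (hk : (n : ℤ) ∣ 3 * k) : GSemidirect n (l - 2 * k) →* Ekl n k l :=
  SemidirectProduct.lift (gklToE l hk) (aPow n k l) (gklToE_comp_shiftHom l hk)

lemma ofGSemidirect_comp_toGSemidirect (hk : (n : ℤ) ∣ 3 * k) :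
    (ofGSemidirect l hk).comp (toGSemidirect l hk) = MonoidHom.id _ := by
  refine PresentedGroup.ext fun b => ?_
  cases b
  · rw [MonoidHom.comp_apply, ← aE, toGSemidirect_aE, ofGSemidirect, lift_inr, aPow_ofAdd_one]
    rfl
  · rw [MonoidHom.comp_apply, ← xE, toGSemidirect_xE, mk_eq_inl_mul_inr, map_mul, ofGSemidirect,
      lift_inl, lift_inr, gklToE, PresentedGroup.toGroup.of, ← Int.cast_zero, gklGen_intCast,
      aPow_ofAdd_intCast]
    simp

lemma toGSemidirect_comp_ofGSemidirect (hk : (n : ℤ) ∣ 3 * k) :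
    (toGSemidirect l hk).comp (ofGSemidirect l hk) = MonoidHom.id _ := by
  refine SemidirectProduct.hom_ext ?_ ?_
  · refine PresentedGroup.ext fun j => ?_
    simp only [ofGSemidirect, MonoidHom.comp_apply, lift_inl, gklToE, PresentedGroup.toGroup.of,
      gklGen, map_mul]
    rw [← MonoidHom.comp_apply _ (aPow n k l), ← MonoidHom.comp_apply _ (aPow n k l),
      toGSemidirect_comp_aPow, toGSemidirect_xE]
    ext
    · simp only [MonoidHom.id_apply, mul_left, left_inr, right_inr, left_inl, map_one, mul_one,
        one_mul, shiftHom_of, toAdd_ofAdd, zero_add]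
    · simp only [MonoidHom.id_apply, mul_right, right_inr, right_inl, ← ofAdd_add, toAdd_ofAdd,
        toAdd_one]
      push_cast
      ring
  · rw [MonoidHom.comp_assoc, ofGSemidirect, lift_comp_inr, toGSemidirect_comp_aPow]
    rfl

def equivGSemidirect (hk : (n : ℤ) ∣ 3 * k) : Ekl n k l ≃* GSemidirect n (l - 2 * k) :=
  (toGSemidirect l hk).toMulEquiv (ofGSemidirect l hk) (ofGSemidirect_comp_toGSemidirect l hk)
    (toGSemidirect_comp_ofGSemidirect l hk)

end Semidirect

def HasG0Kernel (n : ℕ) (k l f p : ℤ) : Prop :=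
  ∃ ν : Ekl n k l →* Multiplicative (ZMod n), ν (aE n k l) = ofAdd (1 : ZMod n) ∧
    ν (xE n k l) = ofAdd (f : ZMod n) ∧ Nonempty (ν.ker ≃* Gkl n 0 p)

section HasG0Kernel

variable {n : ℕ} {k l : ℤ}

theorem hasG0Kernel_of_dvd_three_mul (hk : (n : ℤ) ∣ 3 * k) :
    HasG0Kernel n k l (-k) (l - 2 * k) := by
  refine ⟨rightHom.comp (equivGSemidirect l hk : Ekl n k l →* GSemidirect n (l - 2 * k)), ?_, ?_,
    ⟨kerRightHomEquiv _⟩⟩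
  · rw [MonoidHom.comp_apply, MonoidHom.coe_coe, equivGSemidirect, MonoidHom.toMulEquiv_apply,
      toGSemidirect_aE, rightHom_inr]
  · rw [MonoidHom.comp_apply, MonoidHom.coe_coe, equivGSemidirect, MonoidHom.toMulEquiv_apply,
      toGSemidirect_xE]
    rfl

lemma HasG0Kernel.of_rotate {f p : ℤ} (h : HasG0Kernel n (l - k) (-k) f p) :
    HasG0Kernel n k l f p := by
  obtain ⟨ν, ha, hx, ⟨e⟩⟩ := h
  refine ⟨ν.comp (rotateEquiv n k l : Ekl n k l →* Ekl n (l - k) (-k)), ?_, ?_,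
    ⟨(kerCompMulEquiv _ _).trans e⟩⟩
  · rwa [MonoidHom.comp_apply, MonoidHom.coe_coe, aE, rotateEquiv_of]
  · rwa [MonoidHom.comp_apply, MonoidHom.coe_coe, xE, rotateEquiv_of]

lemma hasG0Kernel_of_dvd_three_mul_right (hl : (n : ℤ) ∣ 3 * l) :
    HasG0Kernel n k l l (k + l) := by
  have h := hasG0Kernel_of_dvd_three_mul (l := k - l) (show (n : ℤ) ∣ 3 * -l by simpa using hl)
  rw [neg_neg, show k - l - 2 * -l = k + l by ring] at h
  refine HasG0Kernel.of_rotate (HasG0Kernel.of_rotate ?_)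
  rwa [show -k - (l - k) = -l by ring, neg_sub]

lemma hasG0Kernel_of_dvd_three_mul_sub (hkl : (n : ℤ) ∣ 3 * (k - l)) :
    HasG0Kernel n k l (k - l) (k - 2 * l) := by
  have h := hasG0Kernel_of_dvd_three_mul (k := l - k) (l := -k)
    (show (n : ℤ) ∣ 3 * (l - k) by rw [← neg_sub, mul_neg]; exact hkl.neg_right)
  rw [neg_sub, show -k - 2 * (l - k) = k - 2 * l by ring] at h
  exact h.of_rotate

end HasG0Kernel

end CPG

theorem statement14_general (n : ℕ) (k l : ℤ)
    (hgcd : Int.gcd (n : ℤ) (Int.gcd k l) = 1) (hkl : ¬ ((3 : ℤ) ∣ (k + l)))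
    (hC : (n : ℤ) ∣ 3 * k ∨ (n : ℤ) ∣ 3 * l ∨ (n : ℤ) ∣ 3 * (k - l)) :
    ∃ f p : ℤ, (n : ℤ) ∣ 3 * f ∧ Int.gcd p (n : ℤ) = 1 ∧
      ∃ ν : CPG.Ekl n k l →* Multiplicative (ZMod n),
        ν (CPG.aE n k l) = Multiplicative.ofAdd (1 : ZMod n) ∧
        ν (CPG.xE n k l) = Multiplicative.ofAdd ((f : ZMod n)) ∧
        Nonempty (ν.ker ≃* CPG.Gkl n 0 p) := by
  rcases hC with h | h | h
  · exact ⟨-k, l - 2 * k, by simpa using h,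
      gcd_eq_one_of_dvd_three_mul hgcd h (by omega) ⟨1, 0, by ring⟩ ⟨2, 1, by ring⟩,
      CPG.hasG0Kernel_of_dvd_three_mul h⟩
  · exact ⟨l, k + l, h,
      gcd_eq_one_of_dvd_three_mul hgcd h (by omega) ⟨-1, 1, by ring⟩ ⟨1, 0, by ring⟩,
      CPG.hasG0Kernel_of_dvd_three_mul_right h⟩
  · exact ⟨k - l, k - 2 * l, h,
      gcd_eq_one_of_dvd_three_mul hgcd h (by omega) ⟨2, -1, by ring⟩ ⟨1, -1, by ring⟩,
      CPG.hasG0Kernel_of_dvd_three_mul_sub h⟩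

/-- Under condition (C) with `gcd(n,k,l) = 1`, `3 ∣ n` and `3 ∤ k+l`,
there are `f` with `n ∣ 3f` and `p` coprime to `n` and a retraction
`ν : E_n(k,l) → ℤ/nℤ` with `ν(a) = 1`, `ν(x) = f`, whose kernel is isomorphic to
`G_n(0,p)`. -/
theorem statement14 (n : ℕ) (hn : 0 < n) (h3 : 3 ∣ n) (k l : ℤ)
    (hgcd : Int.gcd (n : ℤ) (Int.gcd k l) = 1) (hkl : ¬ ((3 : ℤ) ∣ (k + l)))
    (hC : (n : ℤ) ∣ 3 * k ∨ (n : ℤ) ∣ 3 * l ∨ (n : ℤ) ∣ 3 * (k - l)) :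
    ∃ f p : ℤ, (n : ℤ) ∣ 3 * f ∧ Int.gcd p (n : ℤ) = 1 ∧
      ∃ ν : CPG.Ekl n k l →* Multiplicative (ZMod n),
        ν (CPG.aE n k l) = Multiplicative.ofAdd (1 : ZMod n) ∧
        ν (CPG.xE n k l) = Multiplicative.ofAdd ((f : ZMod n)) ∧
        Nonempty (ν.ker ≃* CPG.Gkl n 0 p) :=
  statement14_general n k l hgcd hkl hC
end

section
/- Let k and l be integers with gcd(18, k, l) = 1 and 3 ∣ k+l, such that neither condition (B) nor condition (C) holds for n = 18 (i.e., 18 divides none of k+l, 2k−l, 2l−k, 3k, 3l, 3(k−l)). Then there exist a group isomorphism ψ : E_18(k,l) → E', where E' is the group with presentation (a, u : a^18, u² a⁹ u a⁶), and a homomorphism ν : E' → ℤ/18ℤ with ν(a) = 1, such that ψ carries the image of a in E_18(k,l) to the image of a or of a⁻¹ in E', and ψ restricts to an isomorphism of G_18(k,l) = ker ν⁰ onto ker ν, where ν⁰ : E_18(k,l) → ℤ/18ℤ is the homomorphism with ν⁰(a) = 1 and ν⁰(x) = 0. -/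
namespace CPG

/-- The relator set of `E' = (a, u : a^18, u² a⁹ u a⁶)` (here `a = of false`,
`u = of true`). -/
def relsE' : Set (FreeGroup Bool) := {ga ^ 18, gx ^ 2 * ga ^ 9 * gx * ga ^ 6}

/-- The group `E' = (a, u : a^18, u² a⁹ u a⁶)`. -/
abbrev E' := PresentedGroup relsE'

end CPG

/-!
The moves `(k,l) ↦ (l-k,-k)`, `(-k,-l)`, `(l,k)` preserve `E_n(k,l)` up to isomorphisms
sending `a ↦ a^{±1}` and `x ↦ x^{±1}`: they cyclically permute the relator, invert `a`, and
invert `x`. A finite check over `(ℤ/18)²` shows that under the hypotheses these moves bring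
`(k,l)` to a pair with `l - 2k ≡ 9` and `-l - k ≡ 6 (mod 18)`, for which the substitution
`x = u a⁻ᵏ` turns the presentation of `E_18(k,l)` into that of `E'`. The composite isomorphism
sends `a` to `a^{±1}` and `x` into the kernel of the degree map `a ↦ 1, u ↦ k` of `E'`, so it
matches the kernels of the degree maps.
-/

namespace CPG

open PresentedGroup

section Relator

variable {G : Type*} [Group G]

lemma zpow_eq_zpow_of_intCast_eq {n : ℕ} {A : G} (hA : A ^ n = 1) {e e' : ℤ}
    (h : (e : ZMod n) = e') : A ^ e = A ^ e' :=
  zpow_eq_zpow_iff_modEq.2 <| ((ZMod.intCast_eq_intCast_iff _ _ _).1 h).of_dvd <|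
    Int.natCast_dvd_natCast.2 (orderOf_dvd_of_pow_eq_one hA)

def relatorE (X A : G) (k l : ℤ) : G := X * A ^ k * X * A ^ (l - k) * X * A ^ (-l)

lemma relatorE_inv (X A : G) (k l : ℤ) : relatorE X A⁻¹ k l = relatorE X A (-k) (-l) := by
  simp only [relatorE, inv_zpow', neg_sub, sub_neg_eq_add, neg_add_eq_sub]

lemma relatorE_rot_eq_conj (X A : G) (k l : ℤ) :
    relatorE X A (l - k) (-k) = (X * A ^ k)⁻¹ * relatorE X A k l * (X * A ^ k) := by
  simp only [relatorE]
  group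

lemma relatorE_rot_eq_one_iff {X A : G} {k l : ℤ} :
    relatorE X A (l - k) (-k) = 1 ↔ relatorE X A k l = 1 := by
  rw [relatorE_rot_eq_conj, mul_assoc, inv_mul_eq_one, eq_comm, mul_eq_right]

lemma relatorE_swap_eq_conj (X A : G) (k l : ℤ) :
    relatorE X⁻¹ A k l = X⁻¹ * (relatorE X A l k)⁻¹ * X := by
  simp only [relatorE]
  group

lemma relatorE_swap_eq_one_iff {X A : G} {k l : ℤ} :
    relatorE X⁻¹ A k l = 1 ↔ relatorE X A l k = 1 := by
  rw [relatorE_swap_eq_conj, mul_assoc, inv_mul_eq_one, eq_comm, mul_eq_right, inv_eq_one]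

end Relator

namespace Ekl

variable {n : ℕ} {k l : ℤ}

lemma aE_pow : aE n k l ^ n = 1 :=
  (map_pow _ _ _).symm.trans (one_of_mem (rels := relsE n k l) (Or.inl rfl))

lemma relatorE_xE_aE : relatorE (xE n k l) (aE n k l) k l = 1 := by
  have h := one_of_mem (rels := relsE n k l) (Or.inr rfl)
  simp only [ga, gx, map_mul, map_zpow] at h
  exact h

variable {G : Type*} [Group G]

def lift (A X : G) (hA : A ^ n = 1) (hR : relatorE X A k l = 1) : Ekl n k l →* G :=
  toGroup (f := fun b => cond b X A) <| by
    rintro r (rfl | rfl)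
    · simpa [ga] using hA
    · simpa [ga, gx, relatorE] using hR

variable {A X : G} {hA : A ^ n = 1} {hR : relatorE X A k l = 1}

@[simp] lemma lift_aE : lift A X hA hR (aE n k l) = A := toGroup.of _

@[simp] lemma lift_xE : lift A X hA hR (xE n k l) = X := toGroup.of _

lemma hom_ext {φ φ' : Ekl n k l →* G} (ha : φ (aE n k l) = φ' (aE n k l))
    (hx : φ (xE n k l) = φ' (xE n k l)) : φ = φ' :=
  PresentedGroup.ext fun b => b.rec ha hx

def rotEquiv (n : ℕ) (k l : ℤ) : Ekl n k l ≃* Ekl n (l - k) (-k) :=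
  MonoidHom.toMulEquiv
    (lift (aE _ _ _) (xE _ _ _) aE_pow (relatorE_rot_eq_one_iff.1 relatorE_xE_aE))
    (lift (aE _ _ _) (xE _ _ _) aE_pow (relatorE_rot_eq_one_iff.2 relatorE_xE_aE))
    (hom_ext (by simp) (by simp)) (hom_ext (by simp) (by simp))

def negEquiv (n : ℕ) (k l : ℤ) : Ekl n k l ≃* Ekl n (-k) (-l) :=
  MonoidHom.toMulEquiv
    (lift (aE _ _ _)⁻¹ (xE _ _ _) (by rw [inv_pow, aE_pow, inv_one])
      (by rw [relatorE_inv]; exact relatorE_xE_aE))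
    (lift (aE _ _ _)⁻¹ (xE _ _ _) (by rw [inv_pow, aE_pow, inv_one])
      (by rw [relatorE_inv, neg_neg, neg_neg]; exact relatorE_xE_aE))
    (hom_ext (by simp) (by simp)) (hom_ext (by simp) (by simp))

def swapEquiv (n : ℕ) (k l : ℤ) : Ekl n k l ≃* Ekl n l k :=
  MonoidHom.toMulEquiv
    (lift (aE _ _ _) (xE _ _ _)⁻¹ aE_pow (relatorE_swap_eq_one_iff.2 relatorE_xE_aE))
    (lift (aE _ _ _) (xE _ _ _)⁻¹ aE_pow (relatorE_swap_eq_one_iff.2 relatorE_xE_aE))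
    (hom_ext (by simp) (by simp)) (hom_ext (by simp) (by simp))

@[simp] lemma rotEquiv_aE : rotEquiv n k l (aE n k l) = aE _ _ _ := by
  simp [rotEquiv]
@[simp] lemma rotEquiv_xE : rotEquiv n k l (xE n k l) = xE _ _ _ := by
  simp [rotEquiv]
@[simp] lemma negEquiv_aE : negEquiv n k l (aE n k l) = (aE _ _ _)⁻¹ := by
  simp [negEquiv]
@[simp] lemma negEquiv_xE : negEquiv n k l (xE n k l) = xE _ _ _ := by
  simp [negEquiv]
@[simp] lemma swapEquiv_aE : swapEquiv n k l (aE n k l) = aE _ _ _ := by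
  simp [swapEquiv]
@[simp] lemma swapEquiv_xE : swapEquiv n k l (xE n k l) = (xE _ _ _)⁻¹ := by
  simp [swapEquiv]

lemma ker_eq_of_apply_aE {M : Type*} [CommGroup M] {φ φ₀ : Ekl n k l →* M}
    (ha : φ (aE n k l) = φ₀ (aE n k l) ∨ φ (aE n k l) = (φ₀ (aE n k l))⁻¹)
    (hx : φ (xE n k l) = 1) (hx₀ : φ₀ (xE n k l) = 1) : φ.ker = φ₀.ker := by
  rcases ha with ha | ha
  · rw [hom_ext (φ := φ) (φ' := φ₀) ha (hx.trans hx₀.symm)]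
  · rw [hom_ext (φ := φ) (φ' := φ₀⁻¹) ha (by simp [hx, hx₀])]
    ext g
    simp

end Ekl

namespace E'

def a : E' := of false

def u : E' := of true

lemma a_pow : a ^ 18 = 1 :=
  (map_pow _ _ _).symm.trans (one_of_mem (rels := relsE') (Or.inl rfl))

lemma relator_u_a : u ^ 2 * a ^ 9 * u * a ^ 6 = 1 := by
  have h := one_of_mem (rels := relsE') (Or.inr rfl)
  simp only [ga, gx, map_mul, map_pow] at h
  exact h

variable {G : Type*} [Group G]

def lift (A U : G) (hA : A ^ 18 = 1) (hR : U ^ 2 * A ^ 9 * U * A ^ 6 = 1) : E' →* G :=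
  toGroup (f := fun b => cond b U A) <| by
    rintro r (rfl | rfl)
    · simpa [ga] using hA
    · simpa [ga, gx] using hR

variable {A U : G} {hA : A ^ 18 = 1} {hR : U ^ 2 * A ^ 9 * U * A ^ 6 = 1}

@[simp] lemma lift_a : lift A U hA hR a = A := toGroup.of _

@[simp] lemma lift_u : lift A U hA hR u = U := toGroup.of _

lemma hom_ext {φ φ' : E' →* G} (ha : φ a = φ' a) (hu : φ u = φ' u) : φ = φ' :=
  PresentedGroup.ext fun b => b.rec ha hu

def degree (m : ZMod 18) (hm : 3 * m + 15 = 0) : E' →* Multiplicative (ZMod 18) :=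
  lift (.ofAdd 1) (.ofAdd m) (by decide) <| by
    simp only [← ofAdd_nsmul, ← ofAdd_add, nsmul_eq_mul, ofAdd_eq_one]
    linear_combination hm

end E'

/-- With `ν a = ofAdd 1`, the condition on `x` forces `ν ∘ ψ` to be the degree map of
`E_18(k,l)` or its inverse (`Ekl.ker_eq_of_apply_aE`). -/
def IsoToE' (p : ℤ × ℤ) : Prop :=
  ∃ (ψ : Ekl 18 p.1 p.2 ≃* E') (ν : E' →* Multiplicative (ZMod 18)),
    ν E'.a = .ofAdd 1 ∧ (ψ (aE 18 p.1 p.2) = E'.a ∨ ψ (aE 18 p.1 p.2) = E'.a⁻¹) ∧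
      ν (ψ (xE 18 p.1 p.2)) = 1

/-- Substituting `x = u a⁻ᵏ` turns the relator of `E_18(k,l)` into `u² a^(l-2k) u a^(-l-k)`. -/
def IsBase (p : ZMod 18 × ZMod 18) : Prop := p.2 - 2 * p.1 = 9 ∧ -p.2 - p.1 = 6

instance : DecidablePred IsBase := fun _ => inferInstanceAs (Decidable (_ ∧ _))

section Base

variable {k l : ℤ}

lemma relatorE_u_mul_a_zpow (h : IsBase (k, l)) :
    relatorE (E'.u * E'.a ^ (-k)) E'.a k l = 1 := by
  have h9 : E'.a ^ (l - 2 * k) = E'.a ^ (9 : ℤ) :=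
    zpow_eq_zpow_of_intCast_eq E'.a_pow (by push_cast; exact h.1)
  have h6 : E'.a ^ (-l - k) = E'.a ^ (6 : ℤ) :=
    zpow_eq_zpow_of_intCast_eq E'.a_pow (by push_cast; exact h.2)
  calc relatorE (E'.u * E'.a ^ (-k)) E'.a k l
      = E'.u ^ 2 * E'.a ^ (l - 2 * k) * E'.u * E'.a ^ (-l - k) := by
        simp only [relatorE, pow_two]; group
    _ = 1 := by rw [h9, h6]; exact_mod_cast E'.relator_u_a

lemma relator_xE_mul_aE_pow (h : IsBase (k, l)) :
    (xE 18 k l * aE 18 k l ^ k) ^ 2 * aE 18 k l ^ 9 * (xE 18 k l * aE 18 k l ^ k) *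
      aE 18 k l ^ 6 = 1 := by
  have h9 : aE 18 k l ^ (k + 9) = aE 18 k l ^ (l - k) :=
    zpow_eq_zpow_of_intCast_eq Ekl.aE_pow (by push_cast; linear_combination -h.1)
  have h6 : aE 18 k l ^ (k + 6) = aE 18 k l ^ (-l) :=
    zpow_eq_zpow_of_intCast_eq Ekl.aE_pow (by push_cast; linear_combination -h.2)
  calc (xE 18 k l * aE 18 k l ^ k) ^ 2 * aE 18 k l ^ 9 * (xE 18 k l * aE 18 k l ^ k) *
        aE 18 k l ^ 6
      = xE 18 k l * aE 18 k l ^ k * xE 18 k l * aE 18 k l ^ (k + 9) * xE 18 k l *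
          aE 18 k l ^ (k + 6) := by rw [pow_two]; group
    _ = 1 := by rw [h9, h6]; exact Ekl.relatorE_xE_aE

def substEquiv (h : IsBase (k, l)) : Ekl 18 k l ≃* E' :=
  MonoidHom.toMulEquiv
    (Ekl.lift E'.a (E'.u * E'.a ^ (-k)) E'.a_pow (relatorE_u_mul_a_zpow h))
    (E'.lift (aE 18 k l) (xE 18 k l * aE 18 k l ^ k) Ekl.aE_pow (relator_xE_mul_aE_pow h))
    (Ekl.hom_ext (by simp) (by simp)) (E'.hom_ext (by simp) (by simp))

theorem isoToE'_of_isBase (h : IsBase (k, l)) : IsoToE' (k, l) := by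
  refine ⟨substEquiv h, E'.degree k (by linear_combination -h.1 - h.2), by simp [E'.degree],
    .inl (by simp [substEquiv]), ?_⟩
  simp [substEquiv, E'.degree, ← ofAdd_zsmul]

end Base

lemma IsoToE'.of_mulEquiv {k l k' l' : ℤ} (σ : Ekl 18 k l ≃* Ekl 18 k' l')
    (ha : σ (aE 18 k l) = aE 18 k' l' ∨ σ (aE 18 k l) = (aE 18 k' l')⁻¹)
    (hx : σ (xE 18 k l) = xE 18 k' l' ∨ σ (xE 18 k l) = (xE 18 k' l')⁻¹)
    (h : IsoToE' (k', l')) : IsoToE' (k, l) := by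
  obtain ⟨ψ, ν, hν, hψa, hψx⟩ := h
  refine ⟨σ.trans ψ, ν, hν, ?_, ?_⟩
  · rcases ha with ha | ha <;> rcases hψa with hψa | hψa <;> simp [ha, hψa]
  · rcases hx with hx | hx <;> simp [hx, hψx]

def rot {R : Type*} [Ring R] (p : R × R) : R × R := (p.2 - p.1, -p.1)

lemma IsoToE'.of_rot (p : ℤ × ℤ) (h : IsoToE' (rot p)) : IsoToE' p :=
  .of_mulEquiv (Ekl.rotEquiv 18 _ _) (.inl (by simp)) (.inl (by simp)) h

lemma IsoToE'.of_neg (p : ℤ × ℤ) (h : IsoToE' (-p)) : IsoToE' p :=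
  .of_mulEquiv (Ekl.negEquiv 18 _ _) (.inr (by simp)) (.inl (by simp)) h

lemma IsoToE'.of_swap (p : ℤ × ℤ) (h : IsoToE' p.swap) : IsoToE' p :=
  .of_mulEquiv (Ekl.swapEquiv 18 _ _) (.inl (by simp)) (.inr (by simp)) h

def sym {R : Type*} [Ring R] (s e r : ℕ) (p : R × R) : R × R :=
  rot^[r] (Neg.neg^[e] (Prod.swap^[s] p))

lemma map_sym {R S : Type*} [Ring R] [Ring S] (f : R →+* S) (s e r : ℕ) (p : R × R) :
    Prod.map f f (sym s e r p) = sym s e r (Prod.map f f p) := by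
  have hrot : Function.Semiconj (Prod.map f f) rot rot := fun p =>
    Prod.ext (map_sub f p.2 p.1) (map_neg f p.1)
  have hneg : Function.Semiconj (Prod.map f f) Neg.neg Neg.neg := fun p =>
    Prod.ext (map_neg f p.1) (map_neg f p.2)
  have hswap : Function.Semiconj (Prod.map f f) Prod.swap Prod.swap := fun _ => rfl
  simp only [sym, (hrot.iterate_right r).eq, (hneg.iterate_right e).eq,
    (hswap.iterate_right s).eq]

lemma of_iterate_apply {α : Type*} {P : α → Prop} {f : α → α}
    (hf : ∀ a, P (f a) → P a) : ∀ (r : ℕ) {a : α}, P (f^[r] a) → P a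
  | 0, _, h => h
  | r + 1, a, h => hf a (of_iterate_apply hf r h)

lemma IsoToE'.of_sym (s e r : ℕ) {p : ℤ × ℤ} (h : IsoToE' (sym s e r p)) : IsoToE' p :=
  of_iterate_apply of_swap s <| of_iterate_apply of_neg e <| of_iterate_apply of_rot r h

lemma exists_isBase_sym : ∀ K L : ZMod 18, 6 * (K + L) = 0 →
    ¬(K + L = 0 ∨ 2 * K - L = 0 ∨ 2 * L - K = 0) →
    ¬(3 * K = 0 ∨ 3 * L = 0 ∨ 3 * (K - L) = 0) →
    ∃ s < 2, ∃ e < 2, ∃ r < 3, IsBase (sym s e r (K, L)) := by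
  decide

theorem isoToE'_of_not_B_not_C {k l : ℤ} (h3 : (3 : ℤ) ∣ (k + l))
    (hB : ¬((18 : ℤ) ∣ (k + l) ∨ (18 : ℤ) ∣ (2 * k - l) ∨ (18 : ℤ) ∣ (2 * l - k)))
    (hC : ¬((18 : ℤ) ∣ 3 * k ∨ (18 : ℤ) ∣ 3 * l ∨ (18 : ℤ) ∣ 3 * (k - l))) :
    IsoToE' (k, l) := by
  have dvd_iff (t : ℤ) : (18 : ℤ) ∣ t ↔ (t : ZMod 18) = 0 :=
    (ZMod.intCast_zmod_eq_zero_iff_dvd t 18).symm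
  have h6 : (6 * (k + l) : ZMod 18) = 0 := by
    exact_mod_cast (dvd_iff _).1 (mul_dvd_mul_left 6 h3)
  simp only [dvd_iff] at hB hC
  push_cast at hB hC
  obtain ⟨s, -, e, -, r, -, hbase⟩ := exists_isBase_sym k l h6 hB hC
  have hcast : (((sym s e r (k, l)).1 : ZMod 18), ((sym s e r (k, l)).2 : ZMod 18)) =
      sym s e r ((k : ZMod 18), (l : ZMod 18)) :=
    map_sym (Int.castRingHom (ZMod 18)) s e r (k, l)
  exact IsoToE'.of_sym s e r (isoToE'_of_isBase (hcast ▸ hbase))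

end CPG

theorem statement16_general (k l : ℤ)
    (h3 : (3 : ℤ) ∣ (k + l))
    (hB : ¬((18 : ℤ) ∣ (k + l) ∨ (18 : ℤ) ∣ (2 * k - l) ∨ (18 : ℤ) ∣ (2 * l - k)))
    (hC : ¬((18 : ℤ) ∣ 3 * k ∨ (18 : ℤ) ∣ 3 * l ∨ (18 : ℤ) ∣ 3 * (k - l)))
    (ν₀ : CPG.Ekl 18 k l →* Multiplicative (ZMod 18))
    (hν₀a : ν₀ (CPG.aE 18 k l) = Multiplicative.ofAdd (1 : ZMod 18))
    (hν₀x : ν₀ (CPG.xE 18 k l) = 1) :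
    ∃ (ψ : CPG.Ekl 18 k l ≃* CPG.E') (ν : CPG.E' →* Multiplicative (ZMod 18)),
      ν (PresentedGroup.of false : CPG.E') = Multiplicative.ofAdd (1 : ZMod 18) ∧
      (ψ (CPG.aE 18 k l) = (PresentedGroup.of false : CPG.E') ∨
        ψ (CPG.aE 18 k l) = (PresentedGroup.of false : CPG.E')⁻¹) ∧
      (∀ g : CPG.Ekl 18 k l, g ∈ ν₀.ker ↔ ψ g ∈ ν.ker) := by
  obtain ⟨ψ, ν, hν, hψa, hψx⟩ := CPG.isoToE'_of_not_B_not_C h3 hB hC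
  have hψa' : ν (ψ (CPG.aE 18 k l)) = ν₀ (CPG.aE 18 k l) ∨
      ν (ψ (CPG.aE 18 k l)) = (ν₀ (CPG.aE 18 k l))⁻¹ := by
    rcases hψa with h | h <;> simp [h, hν, hν₀a]
  have hker : (ν.comp ψ.toMonoidHom).ker = ν₀.ker :=
    CPG.Ekl.ker_eq_of_apply_aE hψa' hψx hν₀x
  exact ⟨ψ, ν, hν, hψa, fun g => by rw [← hker]; rfl⟩

/-- For the exceptional case `n = 18`: the extension
`1 → G_18(k,l) → E_18(k,l) → C_18 → 1` is equivalent to one coming from the group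
`E' = (a, u : a^18, u² a⁹ u a⁶)`. -/
theorem statement16 (k l : ℤ) (hgcd : Int.gcd (18 : ℤ) (Int.gcd k l) = 1)
    (h3 : (3 : ℤ) ∣ (k + l))
    (hB : ¬((18 : ℤ) ∣ (k + l) ∨ (18 : ℤ) ∣ (2 * k - l) ∨ (18 : ℤ) ∣ (2 * l - k)))
    (hC : ¬((18 : ℤ) ∣ 3 * k ∨ (18 : ℤ) ∣ 3 * l ∨ (18 : ℤ) ∣ 3 * (k - l)))
    (ν₀ : CPG.Ekl 18 k l →* Multiplicative (ZMod 18))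
    (hν₀a : ν₀ (CPG.aE 18 k l) = Multiplicative.ofAdd (1 : ZMod 18))
    (hν₀x : ν₀ (CPG.xE 18 k l) = 1) :
    ∃ (ψ : CPG.Ekl 18 k l ≃* CPG.E') (ν : CPG.E' →* Multiplicative (ZMod 18)),
      ν (PresentedGroup.of false : CPG.E') = Multiplicative.ofAdd (1 : ZMod 18) ∧
      (ψ (CPG.aE 18 k l) = (PresentedGroup.of false : CPG.E') ∨
        ψ (CPG.aE 18 k l) = (PresentedGroup.of false : CPG.E')⁻¹) ∧
      (∀ g : CPG.Ekl 18 k l, g ∈ ν₀.ker ↔ ψ g ∈ ν.ker) :=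
  statement16_general k l h3 hB hC ν₀ hν₀a hν₀x
end
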